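/- arXiv:2511.15502 — 10 statements merged into one kernel-verified Lean document; each statement's English description precedes it below -/
import Mathlib

section
/- There is exactly one conjugacy class of involutions in PSL(2,q) for any prime power q. -/
open Matrix Polynomial

namespace PSLInvAux

variable {F : Type} [Field F] [Fintype F]

/-- In a finite field, every element is a sum of two squares. -/
lemma sq_add_sq_any (c : F) : ∃ x y : F, x ^ 2 + y ^ 2 = c := by
  by_cases h2 : ringChar F = 2
  · obtain ⟨x, hx⟩ := FiniteField.isSquare_of_char_two h2 c
    exact ⟨x, 0, by rw [hx]; ring⟩
  · let f : F[X] := X ^ 2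
    let g : F[X] := X ^ 2 - C c
    obtain ⟨a, b, hab⟩ := FiniteField.exists_root_sum_quadratic (f := f) (g := g)
      (degree_X_pow 2) (degree_X_pow_sub_C (by norm_num) _)
      (FiniteField.odd_card_of_char_ne_two h2)
    refine ⟨a, b, ?_⟩
    have : a ^ 2 + (b ^ 2 - c) = 0 := by
      simpa [f, g] using hab
    linear_combination this

/-- The companion matrix of `X^2 + 1`. -/
def Cm : Matrix (Fin 2) (Fin 2) F := !![0, -1; 1, 0]

lemma scalar_eq_smul_one (r : F) :
    Matrix.scalar (Fin 2) r = r • (1 : Matrix (Fin 2) (Fin 2) F) := by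
  rw [Matrix.scalar_apply, ← Matrix.smul_one_eq_diagonal]

/-- Any nonscalar trace-zero determinant-one 2×2 matrix is conjugate to the companion
matrix by some invertible matrix. -/
lemma exists_conj_companion (A : Matrix (Fin 2) (Fin 2) F) (hdet : A.det = 1)
    (htr : A.trace = 0) (hns : ∀ r : F, A ≠ r • 1) :
    ∃ P : Matrix (Fin 2) (Fin 2) F, P.det ≠ 0 ∧ A * P = P * Cm := by
  set a := A 0 0 with ha
  set b := A 0 1 with hb
  set c := A 1 0 with hc
  set d := A 1 1 with hd
  have hA : A = !![a, b; c, d] := by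
    rw [ha, hb, hc, hd]; exact Matrix.etaExpand_eq A |>.symm
  have htr' : a + d = 0 := by simpa [hA, Matrix.trace_fin_two] using htr
  have hdet' : a * d - b * c = 1 := by simpa [hA, Matrix.det_fin_two] using hdet
  have hd' : d = -a := by linear_combination htr'
  have hkey : a * a + b * c = -1 := by
    rw [hd'] at hdet'; linear_combination -hdet'
  by_cases hc0 : c ≠ 0
  · refine ⟨!![1, a; 0, c], by simp [Matrix.det_fin_two_of, hc0], ?_⟩
    rw [hA, Cm]
    ext i j
    fin_cases i <;> fin_cases j <;>
      simp [Matrix.mul_apply, Fin.sum_univ_two] <;>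
      first
        | ring1
        | linear_combination hkey
        | linear_combination -hkey
        | linear_combination a * htr'
        | linear_combination -a * htr'
        | linear_combination b * htr'
        | linear_combination -b * htr'
        | linear_combination c * htr'
        | linear_combination -c * htr'
        | linear_combination d * htr'
        | linear_combination -d * htr'
        | linear_combination -hdet' + a * htr'
        | linear_combination hdet' - a * htr'
        | linear_combination -hdet' + d * htr'
        | linear_combination hdet' - d * htr'
  push_neg at hc0
  by_cases hb0 : b ≠ 0
  · refine ⟨!![0, b; 1, d], by simp [Matrix.det_fin_two_of, hb0], ?_⟩
    rw [hA, Cm]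
    ext i j
    fin_cases i <;> fin_cases j <;>
      simp [Matrix.mul_apply, Fin.sum_univ_two] <;>
      first
        | ring1
        | linear_combination hkey
        | linear_combination -hkey
        | linear_combination a * htr'
        | linear_combination -a * htr'
        | linear_combination b * htr'
        | linear_combination -b * htr'
        | linear_combination c * htr'
        | linear_combination -c * htr'
        | linear_combination d * htr'
        | linear_combination -d * htr'
        | linear_combination -hdet' + a * htr'
        | linear_combination hdet' - a * htr'
        | linear_combination -hdet' + d * htr'
        | linear_combination hdet' - d * htr'
  push_neg at hb0
  -- diagonal case
  have ha2 : a * a = -1 := by rw [hb0, hc0] at hkey; linear_combination hkey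
  have h2a : a ≠ -a := by
    intro h
    apply hns a
    rw [hA, hb0, hc0, hd', ← h]
    ext i j
    fin_cases i <;> fin_cases j <;> simp
  refine ⟨!![1, a; 1, -a], ?_, ?_⟩
  · simp only [Matrix.det_fin_two_of]
    intro h
    exact h2a (by linear_combination -h)
  · rw [hA, hb0, hc0, hd', Cm]
    ext i j
    fin_cases i <;> fin_cases j <;>
      simp [Matrix.mul_apply, Fin.sum_univ_two] <;>
      first
        | ring1
        | linear_combination ha2
        | linear_combination -ha2

/-- Any two nonscalar trace-zero elements of `SL(2,F)` are conjugate in `SL(2,F)`. -/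
lemma isConj_sl (A B : Matrix.SpecialLinearGroup (Fin 2) F)
    (htA : (A : Matrix (Fin 2) (Fin 2) F).trace = 0)
    (hnA : ∀ r : F, (A : Matrix (Fin 2) (Fin 2) F) ≠ r • 1)
    (htB : (B : Matrix (Fin 2) (Fin 2) F).trace = 0)
    (hnB : ∀ r : F, (B : Matrix (Fin 2) (Fin 2) F) ≠ r • 1) :
    IsConj A B := by
  obtain ⟨P, hP, hAP⟩ := exists_conj_companion (A : Matrix (Fin 2) (Fin 2) F) A.2 htA hnA
  obtain ⟨Q, hQ, hBQ⟩ := exists_conj_companion (B : Matrix (Fin 2) (Fin 2) F) B.2 htB hnB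
  obtain ⟨x, y, hxy⟩ := sq_add_sq_any (P.det * Q.det⁻¹)
  set M : Matrix (Fin 2) (Fin 2) F := !![x, -y; y, x] with hM
  have hMC : M * Cm = Cm * M := by
    rw [hM, Cm]
    ext i j
    fin_cases i <;> fin_cases j <;> simp [Matrix.mul_apply, Fin.sum_univ_two]
  have hdetM : M.det = x ^ 2 + y ^ 2 := by
    simp [hM, Matrix.det_fin_two_of]; ring
  have hPu : IsUnit P.det := isUnit_iff_ne_zero.mpr hP
  set S := Q * M * P⁻¹ with hS
  have hPinvA : P⁻¹ * (A : Matrix (Fin 2) (Fin 2) F) = Cm * P⁻¹ := by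
    have h1 : P⁻¹ * ((A : Matrix (Fin 2) (Fin 2) F) * P) * P⁻¹ = P⁻¹ * (P * Cm) * P⁻¹ := by
      rw [hAP]
    calc P⁻¹ * (A : Matrix (Fin 2) (Fin 2) F)
        = P⁻¹ * (A : Matrix (Fin 2) (Fin 2) F) * (P * P⁻¹) := by
          rw [Matrix.mul_nonsing_inv P hPu, mul_one]
      _ = P⁻¹ * ((A : Matrix (Fin 2) (Fin 2) F) * P) * P⁻¹ := by
          noncomm_ring
      _ = P⁻¹ * (P * Cm) * P⁻¹ := h1
      _ = (P⁻¹ * P) * Cm * P⁻¹ := by noncomm_ring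
      _ = Cm * P⁻¹ := by rw [Matrix.nonsing_inv_mul P hPu, one_mul]
  have hdetS : S.det = 1 := by
    rw [hS, Matrix.det_mul, Matrix.det_mul, Matrix.det_nonsing_inv, hdetM, hxy,
      Ring.inverse_eq_inv']
    field_simp
  have hcomm : S * (A : Matrix (Fin 2) (Fin 2) F) = (B : Matrix (Fin 2) (Fin 2) F) * S := by
    calc S * (A : Matrix (Fin 2) (Fin 2) F)
        = Q * M * (P⁻¹ * (A : Matrix (Fin 2) (Fin 2) F)) := by rw [hS]; noncomm_ring
      _ = Q * (M * Cm) * P⁻¹ := by rw [hPinvA]; noncomm_ring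
      _ = (Q * Cm) * M * P⁻¹ := by rw [hMC]; noncomm_ring
      _ = ((B : Matrix (Fin 2) (Fin 2) F) * Q) * M * P⁻¹ := by rw [hBQ]
      _ = (B : Matrix (Fin 2) (Fin 2) F) * S := by rw [hS]; noncomm_ring
  let S' : Matrix.SpecialLinearGroup (Fin 2) F := ⟨S, hdetS⟩
  refine isConj_iff.mpr ⟨S', ?_⟩
  rw [mul_inv_eq_iff_eq_mul]
  exact Subtype.ext (by
    rw [Matrix.SpecialLinearGroup.coe_mul, Matrix.SpecialLinearGroup.coe_mul]; exact hcomm)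

noncomputable abbrev pi (F : Type) [Field F] :
    Matrix.SpecialLinearGroup (Fin 2) F →* Matrix.ProjectiveSpecialLinearGroup (Fin 2) F :=
  QuotientGroup.mk' (Subgroup.center (Matrix.SpecialLinearGroup (Fin 2) F))

lemma scalar_mem_center (r : F) (A : Matrix.SpecialLinearGroup (Fin 2) F)
    (h : (A : Matrix (Fin 2) (Fin 2) F) = r • 1) :
    A ∈ Subgroup.center (Matrix.SpecialLinearGroup (Fin 2) F) := by
  rw [Matrix.SpecialLinearGroup.mem_center_iff]
  refine ⟨r, ?_, ?_⟩
  · have : ((A : Matrix (Fin 2) (Fin 2) F)).det = 1 := A.2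
    rw [h] at this
    simpa [Matrix.det_fin_two, Fintype.card_fin] using this
  · rw [h, scalar_eq_smul_one]

lemma order_two_iff (A : Matrix.SpecialLinearGroup (Fin 2) F) :
    orderOf (pi F A) = 2 ↔
      (A : Matrix (Fin 2) (Fin 2) F).trace = 0 ∧
        ∀ r : F, (A : Matrix (Fin 2) (Fin 2) F) ≠ r • 1 := by
  constructor
  · intro h
    have hne1 : pi F A ≠ 1 := by
      intro h1
      rw [h1, orderOf_one] at h
      norm_num at h
    have hns : ∀ r : F, (A : Matrix (Fin 2) (Fin 2) F) ≠ r • 1 := by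
      intro r hr
      exact hne1 ((QuotientGroup.eq_one_iff A).mpr (scalar_mem_center r A hr))
    refine ⟨?_, hns⟩
    -- A^2 ∈ center
    have hsq : pi F (A ^ 2) = 1 := by
      have h2 := pow_orderOf_eq_one (pi F A)
      rw [h] at h2
      rw [map_pow]
      exact h2
    have hmem : A ^ 2 ∈ Subgroup.center (Matrix.SpecialLinearGroup (Fin 2) F) :=
      (QuotientGroup.eq_one_iff _).mp hsq
    obtain ⟨r, hr1, hr2⟩ := Matrix.SpecialLinearGroup.mem_center_iff.mp hmem
    have hr2' : (A : Matrix (Fin 2) (Fin 2) F) * (A : Matrix (Fin 2) (Fin 2) F) = r • 1 := by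
      have : ((A ^ 2 : Matrix.SpecialLinearGroup (Fin 2) F) : Matrix (Fin 2) (Fin 2) F)
          = Matrix.scalar (Fin 2) r := hr2.symm
      rw [pow_two] at this
      rw [show ((A * A : Matrix.SpecialLinearGroup (Fin 2) F) : Matrix (Fin 2) (Fin 2) F)
          = (A : Matrix (Fin 2) (Fin 2) F) * (A : Matrix (Fin 2) (Fin 2) F) from rfl] at this
      rw [this, scalar_eq_smul_one]
    -- now entrywise
    set a := (A : Matrix (Fin 2) (Fin 2) F) 0 0 with ha
    set b := (A : Matrix (Fin 2) (Fin 2) F) 0 1 with hb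
    set c := (A : Matrix (Fin 2) (Fin 2) F) 1 0 with hc
    set d := (A : Matrix (Fin 2) (Fin 2) F) 1 1 with hd
    have e01 : b * (a + d) = 0 := by
      have := congrFun (congrFun hr2' 0) 1
      simp [Matrix.mul_apply, Fin.sum_univ_two, Matrix.smul_apply, Matrix.one_apply,
        ← ha, ← hb, ← hc, ← hd] at this
      linear_combination this
    have e10 : c * (a + d) = 0 := by
      have := congrFun (congrFun hr2' 1) 0
      simp [Matrix.mul_apply, Fin.sum_univ_two, Matrix.smul_apply, Matrix.one_apply,
        ← ha, ← hb, ← hc, ← hd] at this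
      linear_combination this
    have e00 : a * a + b * c = r := by
      have := congrFun (congrFun hr2' 0) 0
      simpa [Matrix.mul_apply, Fin.sum_univ_two, Matrix.smul_apply, Matrix.one_apply,
        ← ha, ← hb, ← hc, ← hd] using this
    have e11 : c * b + d * d = r := by
      have := congrFun (congrFun hr2' 1) 1
      simpa [Matrix.mul_apply, Fin.sum_univ_two, Matrix.smul_apply, Matrix.one_apply,
        ← ha, ← hb, ← hc, ← hd] using this
    rw [Matrix.trace_fin_two, ← ha, ← hd]
    by_contra htr
    have hb0 : b = 0 := by
      rcases mul_eq_zero.mp e01 with h | h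
      · exact h
      · exact absurd h htr
    have hc0 : c = 0 := by
      rcases mul_eq_zero.mp e10 with h | h
      · exact h
      · exact absurd h htr
    have had : a = d := by
      have : (a - d) * (a + d) = 0 := by
        rw [hb0, hc0] at e00 e11
        linear_combination e00 - e11
      rcases mul_eq_zero.mp this with h | h
      · linear_combination h
      · exact absurd h htr
    apply hns a
    have hAeta : (A : Matrix (Fin 2) (Fin 2) F) = !![a, b; c, d] := by
      rw [ha, hb, hc, hd]; exact (Matrix.etaExpand_eq _).symm
    rw [hAeta, hb0, hc0, ← had]
    ext i j
    fin_cases i <;> fin_cases j <;> simp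
  · rintro ⟨htr, hns⟩
    have hAsq : (A : Matrix (Fin 2) (Fin 2) F) * (A : Matrix (Fin 2) (Fin 2) F)
        = (-1 : F) • 1 := by
      set a := (A : Matrix (Fin 2) (Fin 2) F) 0 0 with ha
      set b := (A : Matrix (Fin 2) (Fin 2) F) 0 1 with hb
      set c := (A : Matrix (Fin 2) (Fin 2) F) 1 0 with hc
      set d := (A : Matrix (Fin 2) (Fin 2) F) 1 1 with hd
      have hAeta : (A : Matrix (Fin 2) (Fin 2) F) = !![a, b; c, d] := by
        rw [ha, hb, hc, hd]; exact (Matrix.etaExpand_eq _).symm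
      have htr' : a + d = 0 := by simpa [hAeta, Matrix.trace_fin_two] using htr
      have hdet' : a * d - b * c = 1 := by
        have := A.2
        simpa [hAeta, Matrix.det_fin_two] using this
      have hd' : d = -a := by linear_combination htr'
      rw [hAeta]
      ext i j
      fin_cases i <;> fin_cases j <;>
        simp [Matrix.mul_apply, Fin.sum_univ_two, Matrix.smul_apply, Matrix.one_apply] <;>
        first
          | ring1
          | linear_combination a * htr'
          | linear_combination -a * htr'
          | linear_combination b * htr'
          | linear_combination -b * htr'
          | linear_combination c * htr'
          | linear_combination -c * htr'
          | linear_combination d * htr'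
          | linear_combination -d * htr'
          | linear_combination -hdet' + a * htr'
          | linear_combination hdet' - a * htr'
          | linear_combination -hdet' + d * htr'
          | linear_combination hdet' - d * htr'
    have hmem : A ^ 2 ∈ Subgroup.center (Matrix.SpecialLinearGroup (Fin 2) F) := by
      rw [Matrix.SpecialLinearGroup.mem_center_iff]
      refine ⟨-1, by norm_num [Fintype.card_fin], ?_⟩
      have : ((A ^ 2 : Matrix.SpecialLinearGroup (Fin 2) F) : Matrix (Fin 2) (Fin 2) F)
          = (A : Matrix (Fin 2) (Fin 2) F) * (A : Matrix (Fin 2) (Fin 2) F) := by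
        rw [pow_two]; rfl
      rw [this, hAsq, scalar_eq_smul_one]
    have hsq1 : (pi F A) ^ 2 = 1 := by
      rw [← map_pow]
      exact (QuotientGroup.eq_one_iff _).mpr hmem
    have hne1 : pi F A ≠ 1 := by
      intro h1
      have hcen := (QuotientGroup.eq_one_iff A).mp h1
      obtain ⟨r, _, hr2⟩ := Matrix.SpecialLinearGroup.mem_center_iff.mp hcen
      apply hns r
      rw [← hr2, scalar_eq_smul_one]
    exact orderOf_eq_prime hsq1 hne1

end PSLInvAux

/-- There is exactly one conjugacy class of involutions in `PSL(2,q)` for any prime power `q`. -/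
theorem psl_two_unique_involution_class (p n q : ℕ) (hp : p.Prime) (hn : n ≠ 0)
    (hq : q = p ^ n) (F : Type) [Field F] [Fintype F] (hF : Fintype.card F = q) :
    ∃! c : ConjClasses (Matrix.ProjectiveSpecialLinearGroup (Fin 2) F),
      ∃ g, ConjClasses.mk g = c ∧ orderOf g = 2 := by
  classical
  set A₀ : Matrix.SpecialLinearGroup (Fin 2) F :=
    ⟨!![0, -1; 1, 0], by simp [Matrix.det_fin_two_of]⟩ with hA₀
  have htA₀ : ((A₀ : Matrix (Fin 2) (Fin 2) F)).trace = 0 := by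
    simp [hA₀, Matrix.trace_fin_two]
  have hnA₀ : ∀ r : F, (A₀ : Matrix (Fin 2) (Fin 2) F) ≠ r • 1 := by
    intro r h
    have := congrFun (congrFun h 1) 0
    simp [hA₀, Matrix.smul_apply, Matrix.one_apply] at this
  have hord : orderOf (PSLInvAux.pi F A₀) = 2 :=
    (PSLInvAux.order_two_iff A₀).mpr ⟨htA₀, hnA₀⟩
  refine ⟨ConjClasses.mk (PSLInvAux.pi F A₀), ⟨PSLInvAux.pi F A₀, rfl, hord⟩, ?_⟩
  rintro c ⟨g, rfl, hg⟩
  obtain ⟨A, rfl⟩ := QuotientGroup.mk'_surjective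
    (Subgroup.center (Matrix.SpecialLinearGroup (Fin 2) F)) g
  obtain ⟨htA, hnA⟩ := (PSLInvAux.order_two_iff A).mp hg
  have hconj : IsConj A A₀ := PSLInvAux.isConj_sl A A₀ htA hnA htA₀ hnA₀
  exact ConjClasses.mk_eq_mk_iff_isConj.mpr ((PSLInvAux.pi F).map_isConj hconj)
end

section
/- Let q be a power of a prime p and e = gcd(2, q-1). The group PSL(2,q) has exactly e conjugacy classes of elements of order p. -/
open Matrix
open scoped MatrixGroups

namespace PSLU

set_option linter.unusedSectionVars false

variable {F : Type} [Field F] [Fintype F]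

/-- the unipotent matrix [[1,a],[0,1]] as an element of SL(2,F) -/
def t (a : F) : SpecialLinearGroup (Fin 2) F :=
  ⟨!![1, a; 0, 1], by simp [Matrix.det_fin_two_of]⟩

@[simp] lemma t_val (a : F) : (t a).val = !![1, a; 0, 1] := rfl


def negOne : SpecialLinearGroup (Fin 2) F :=
  ⟨-1, by rw [Matrix.det_neg]; simp⟩

@[simp] lemma negOne_val : (negOne : SpecialLinearGroup (Fin 2) F).val = -1 := rfl

lemma fin_two_entries {α : Type*} {a b c d e f g h : α} (H : !![a,b;c,d] = !![e,f;g,h]) :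
    a = e ∧ b = f ∧ c = g ∧ d = h := by
  refine ⟨?_, ?_, ?_, ?_⟩
  · simpa using congr_fun₂ H 0 0
  · simpa using congr_fun₂ H 0 1
  · simpa using congr_fun₂ H 1 0
  · simpa using congr_fun₂ H 1 1

lemma t_mul (a b : F) : t a * t b = t (a + b) := by
  apply Subtype.ext
  rw [Matrix.SpecialLinearGroup.coe_mul]
  simp [t, Matrix.mul_fin_two, add_comm]

lemma t_zero : (t 0 : SpecialLinearGroup (Fin 2) F) = 1 := by
  apply Subtype.ext
  simp [t]
  exact (Matrix.eta_fin_two 1).symm.trans (by norm_num)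

lemma t_pow (a : F) (k : ℕ) : t a ^ k = t ((k : F) * a) := by
  induction k with
  | zero => simpa using t_zero.symm
  | succ m ih =>
      rw [pow_succ, ih, t_mul]
      congr 1
      push_cast
      ring

lemma mem_center_iff' {A : SpecialLinearGroup (Fin 2) F} :
    A ∈ Subgroup.center (SpecialLinearGroup (Fin 2) F) ↔ A = 1 ∨ A = negOne := by
  rw [Matrix.SpecialLinearGroup.mem_center_iff]
  constructor
  · rintro ⟨r, hr, hA⟩
    rw [Fintype.card_fin] at hr
    have : r = 1 ∨ r = -1 := by
      exact mul_self_eq_one_iff.mp (by rwa [pow_two] at hr)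
    rcases this with rfl | rfl
    · left; apply Subtype.ext; rw [← hA]; simp
    · right; apply Subtype.ext; rw [← hA]; simp only [negOne_val, map_neg, (Matrix.scalar (Fin 2)).map_one]
  · rintro (rfl | rfl)
    · exact ⟨1, by simp, by simp⟩
    · refine ⟨-1, by simp [Fintype.card_fin], ?_⟩
      simp only [negOne_val, map_neg, (Matrix.scalar (Fin 2)).map_one]


lemma negOne_mul_negOne : (negOne * negOne : SpecialLinearGroup (Fin 2) F) = 1 := by
  apply Subtype.ext
  simp

lemma negOne_mem_center :
    (negOne : SpecialLinearGroup (Fin 2) F) ∈ Subgroup.center (SpecialLinearGroup (Fin 2) F) :=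
  mem_center_iff'.mpr (Or.inr rfl)

/-- image of `t a` in PSL(2,F) -/
def T (a : F) : PSL(2, F) := QuotientGroup.mk (t a)

lemma mk_eq_mk {A B : SpecialLinearGroup (Fin 2) F} :
    (QuotientGroup.mk A : PSL(2, F)) = QuotientGroup.mk B ↔ B = A ∨ B = A * negOne := by
  rw [QuotientGroup.eq, mem_center_iff']
  constructor
  · rintro (h | h)
    · left; rw [← mul_one A, ← h]; group
    · right; rw [← h]; group
  · rintro (rfl | rfl)
    · left; group
    · right; group

lemma mk_pow (A : SpecialLinearGroup (Fin 2) F) (k : ℕ) :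
    (QuotientGroup.mk A : PSL(2, F)) ^ k = QuotientGroup.mk (A ^ k) := rfl

lemma T_ne_one {a : F} (ha : a ≠ 0) : (T a : PSL(2, F)) ≠ 1 := by
  intro h
  have h' : (QuotientGroup.mk (t a) : PSL(2, F)) = QuotientGroup.mk 1 := by
    simpa [T] using h
  rcases mk_eq_mk.mp h' with h1 | h1
  · have := congr_arg (fun X => X.val 0 1) h1
    simp [t] at this
    exact ha this.symm
  · have := congr_arg (fun X => X.val 0 1) h1
    simp [Matrix.SpecialLinearGroup.coe_mul] at this
    exact ha this

lemma orderOf_T (p : ℕ) [Fact p.Prime] [CharP F p] {a : F} (ha : a ≠ 0) :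
    orderOf (T a : PSL(2, F)) = p := by
  apply orderOf_eq_prime
  · rw [T, mk_pow, t_pow, CharP.cast_eq_zero, zero_mul, t_zero]
    rfl
  · exact T_ne_one ha

/-- conjugating by diag(x, x⁻¹) -/
lemma isConj_T_sq (a x : F) (hx : x ≠ 0) : IsConj (T a : PSL(2, F)) (T (x ^ 2 * a)) := by
  have hdet : Matrix.det !![x, 0; 0, x⁻¹] = 1 := by
    simp [Matrix.det_fin_two_of, mul_inv_cancel₀ hx]
  set d : SpecialLinearGroup (Fin 2) F := ⟨!![x, 0; 0, x⁻¹], hdet⟩ with hd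
  have key : d * t a = t (x ^ 2 * a) * d := by
    apply Subtype.ext
    rw [Matrix.SpecialLinearGroup.coe_mul, Matrix.SpecialLinearGroup.coe_mul]
    simp only [Matrix.SpecialLinearGroup.coe_mul, t_val, hd]
    rw [Matrix.mul_fin_two, Matrix.mul_fin_two]
    have hx2 : x ^ 2 * a * x⁻¹ = x * a := by
      field_simp
    simp [hx2]
  rw [isConj_iff]
  refine ⟨QuotientGroup.mk d, ?_⟩
  rw [mul_inv_eq_iff_eq_mul]
  show QuotientGroup.mk d * QuotientGroup.mk (t a) = QuotientGroup.mk (t (x ^ 2 * a)) * QuotientGroup.mk d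
  rw [← QuotientGroup.mk_mul, ← QuotientGroup.mk_mul, key]


lemma isConj_T_rev (hchar : (2 : F) ≠ 0) {a b : F} (hb : b ≠ 0)
    (h : IsConj (T a : PSL(2, F)) (T b)) : ∃ x : F, x ≠ 0 ∧ b = x ^ 2 * a := by
  rw [isConj_iff] at h
  obtain ⟨c, hc⟩ := h
  obtain ⟨S, rfl⟩ := QuotientGroup.mk_surjective c
  rw [mul_inv_eq_iff_eq_mul] at hc
  have hc' : (QuotientGroup.mk (S * t a) : PSL(2, F)) = QuotientGroup.mk (t b * S) := by
    simpa [T, QuotientGroup.mk_mul] using hc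
  obtain ⟨x, y, z, w, hS⟩ : ∃ x y z w, S.val = !![x, y; z, w] :=
    ⟨_, _, _, _, Matrix.eta_fin_two S.val⟩
  have hdet : x * w - y * z = 1 := by
    have := S.2
    rw [hS, Matrix.det_fin_two_of] at this
    exact this
  rcases mk_eq_mk.mp hc' with h1 | h1
  · -- t b * S = S * t a
    have hv := congr_arg Subtype.val h1
    rw [Matrix.SpecialLinearGroup.coe_mul, Matrix.SpecialLinearGroup.coe_mul, hS, t_val, t_val,
      Matrix.mul_fin_two, Matrix.mul_fin_two] at hv
    obtain ⟨e11, e12, e21, e22⟩ := fin_two_entries hv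
    have hz : z = 0 := by
      have hbz : b * z = 0 := by linear_combination e11
      exact (mul_eq_zero.mp hbz).resolve_left hb
    rw [hz] at hdet
    have hxw : x * w = 1 := by linear_combination hdet
    have hx : x ≠ 0 := left_ne_zero_of_mul_eq_one hxw
    have hbw : b * w = x * a := by linear_combination e12
    refine ⟨x, hx, ?_⟩
    calc b = b * (x * w) := by rw [hxw, mul_one]
      _ = x * (b * w) := by ring
      _ = x * (x * a) := by rw [hbw]
      _ = x ^ 2 * a := by ring
  · -- t b * S = S * t a * negOne
    exfalso
    have hv := congr_arg Subtype.val h1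
    rw [Matrix.SpecialLinearGroup.coe_mul, Matrix.SpecialLinearGroup.coe_mul,
      Matrix.SpecialLinearGroup.coe_mul, negOne_val, hS, t_val, t_val, mul_neg_one,
      Matrix.mul_fin_two, Matrix.mul_fin_two] at hv
    have e21 := congr_fun₂ hv 1 0
    have e11 := congr_fun₂ hv 0 0
    simp at e21 e11
    have hz : z = 0 := by
      have h2z : (2 : F) * z = 0 := by linear_combination e21
      exact (mul_eq_zero.mp h2z).resolve_left hchar
    have hx : x = 0 := by
      have h2x : (2 : F) * x = 0 := by linear_combination e11 - b * hz
      exact (mul_eq_zero.mp h2x).resolve_left hchar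
    rw [hz, hx] at hdet
    simp at hdet


lemma negOne_sq : (negOne * negOne : SpecialLinearGroup (Fin 2) F) = 1 := negOne_mul_negOne

/-- every unipotent element of SL(2,F) (≠ 1, p-th power = 1) is conjugate to some t a -/
lemma sl_exists_conj (p : ℕ) [Fact p.Prime] [CharP F p] (B : SpecialLinearGroup (Fin 2) F)
    (hBp : B ^ p = 1) (hB1 : B ≠ 1) : ∃ a : F, a ≠ 0 ∧ IsConj (t a) B := by
  have hp2 : 2 ≤ p := (Fact.out : p.Prime).two_le
  set M : Matrix (Fin 2) (Fin 2) F := B.val with hM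
  have hMp : M ^ p = 1 := by
    have := congr_arg Subtype.val hBp
    simpa [Matrix.SpecialLinearGroup.coe_pow] using this
  set N : Matrix (Fin 2) (Fin 2) F := M - 1 with hN
  have hNp : N ^ p = 0 := by
    rw [hN, sub_pow_char_of_commute _ (Commute.one_right M), hMp, one_pow, sub_self]
  have hN0 : N ≠ 0 := by
    intro h
    apply hB1
    apply Subtype.ext
    have : M - 1 = 0 := h
    have := sub_eq_zero.mp this
    simpa using this
  have hdetN : N.det = 0 := by
    have : N.det ^ p = 0 := by rw [← Matrix.det_pow, hNp, Matrix.det_zero]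
    exact pow_eq_zero_iff (by omega) |>.mp this
  -- Cayley–Hamilton for 2×2 with det = 0 : N * N = trace • N
  obtain ⟨A11, A12, A21, A22, hNeq⟩ : ∃ a b c d, N = !![a, b; c, d] :=
    ⟨_, _, _, _, Matrix.eta_fin_two N⟩
  have hdet' : A11 * A22 - A12 * A21 = 0 := by
    rw [hNeq, Matrix.det_fin_two_of] at hdetN; exact hdetN
  have hsq : N * N = N.trace • N := by
    rw [hNeq, Matrix.mul_fin_two, Matrix.trace_fin_two_of]
    ext i j
    fin_cases i <;> fin_cases j <;> simp <;>
      first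
        | ring1
        | linear_combination hdet'
        | linear_combination -hdet'
  have hpow : ∀ k : ℕ, N ^ (k + 1) = N.trace ^ k • N := by
    intro k
    induction k with
    | zero => simp
    | succ m ih =>
        rw [pow_succ, ih, smul_mul_assoc, hsq, smul_smul, pow_succ]
  have htr : N.trace = 0 := by
    have h1 : N.trace ^ (p - 1) • N = 0 := by
      rw [← hpow, Nat.sub_add_cancel (by omega), hNp]
    rcases smul_eq_zero.mp h1 with h | h
    · exact pow_eq_zero_iff (by omega) |>.mp h
    · exact absurd h hN0
  have htr' : A11 + A22 = 0 := by
    rw [hNeq, Matrix.trace_fin_two_of] at htr; exact htr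
  have hA22 : A22 = -A11 := by linear_combination htr'
  -- M = 1 + N
  have hMeq : M = !![1 + A11, A12; A21, 1 + A22] := by
    rw [← sub_add_cancel M 1, ← hN, hNeq]
    ext i j
    fin_cases i <;> fin_cases j <;> simp [Matrix.one_apply] <;> ring
  by_cases hc : A21 = 0
  · -- already upper triangular
    have hA11 : A11 = 0 := by
      have : A11 * A11 = 0 := by linear_combination -hdet' - A12 * hc + A11 * hA22
      exact (mul_self_eq_zero).mp this
    have hb : A12 ≠ 0 := by
      intro hb
      apply hN0
      rw [hNeq, hA11, hb, hc, hA22, hA11]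
      norm_num
      ext i j
      fin_cases i <;> fin_cases j <;> simp
    refine ⟨A12, hb, ?_⟩
    have : B = t A12 := by
      apply Subtype.ext
      rw [t_val, ← hM, hMeq, hA11, hA22, hA11, hc]
      norm_num
    rw [this]
  · -- conjugate by !![-(A11/A21), 1; -1, 0]
    have hdetg : Matrix.det !![-(A11/A21), 1; (-1 : F), 0] = 1 := by
      simp [Matrix.det_fin_two_of]
    refine ⟨-A21, neg_ne_zero.mpr hc, ?_⟩
    rw [isConj_iff]
    set g : SpecialLinearGroup (Fin 2) F := ⟨!![-(A11/A21), 1; -1, 0], hdetg⟩ with hg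
    refine ⟨g, ?_⟩
    rw [mul_inv_eq_iff_eq_mul]
    apply Subtype.ext
    rw [Matrix.SpecialLinearGroup.coe_mul, Matrix.SpecialLinearGroup.coe_mul, t_val, ← hM, hMeq]
    show !![-(A11/A21), 1; -1, 0] * !![1, -A21; 0, 1] = _
    rw [Matrix.mul_fin_two, Matrix.mul_fin_two, hA22]
    have hbc : A12 * A21 = -(A11 * A11) := by linear_combination -hdet' + A11 * hA22
    ext i j
    fin_cases i <;> fin_cases j <;>
      simp only [Fin.zero_eta, Fin.mk_one, Matrix.of_apply, Matrix.cons_val', Matrix.cons_val_zero,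
        Matrix.cons_val_one, Matrix.empty_val', Matrix.cons_val_fin_one, Matrix.head_cons] <;>
      field_simp <;>
      first
        | ring1
        | linear_combination A21 * hbc
        | linear_combination -A21 * hbc
        | linear_combination hbc
        | linear_combination -hbc

lemma exists_conj_T (p : ℕ) [Fact p.Prime] [CharP F p] (g : PSL(2, F)) (hg : orderOf g = p) :
    ∃ a : F, a ≠ 0 ∧ IsConj (T a) g := by
  obtain ⟨A, rfl⟩ := QuotientGroup.mk_surjective g
  have hA1 : (QuotientGroup.mk A : PSL(2, F)) ≠ 1 := by
    intro h
    rw [h, orderOf_one] at hg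
    exact absurd hg.symm (Fact.out : p.Prime).ne_one
  have hApow : A ^ p = 1 ∨ A ^ p = negOne := by
    have h1 : (QuotientGroup.mk (A ^ p) : PSL(2, F)) = 1 := by
      rw [← mk_pow, ← hg, pow_orderOf_eq_one]
    exact mem_center_iff'.mp ((QuotientGroup.eq_one_iff _).mp h1)
  -- find B with mk B = mk A and B ^ p = 1
  obtain ⟨B, hBmk, hBp⟩ : ∃ B : SpecialLinearGroup (Fin 2) F,
      (QuotientGroup.mk B : PSL(2, F)) = QuotientGroup.mk A ∧ B ^ p = 1 := by
    rcases hApow with h | h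
    · exact ⟨A, rfl, h⟩
    · by_cases hp2 : p = 2
      · refine ⟨A, rfl, ?_⟩
        have hchar2 : CharP F 2 := by rwa [hp2] at ‹CharP F p›
        have : (negOne : SpecialLinearGroup (Fin 2) F) = 1 := by
          apply Subtype.ext
          simp only [negOne_val, Matrix.SpecialLinearGroup.coe_one]
          haveI : CharP (Matrix (Fin 2) (Fin 2) F) 2 := Matrix.charP 2
          exact CharTwo.neg_eq 1
        rw [h, this]
      · have hodd : Odd p := (Fact.out : p.Prime).odd_of_ne_two hp2
        refine ⟨negOne * A, ?_, ?_⟩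
        · rw [QuotientGroup.mk_mul]
          have : (QuotientGroup.mk negOne : PSL(2, F)) = 1 :=
            (QuotientGroup.eq_one_iff _).mpr negOne_mem_center
          rw [this, one_mul]
        · have hcomm : Commute (negOne : SpecialLinearGroup (Fin 2) F) A :=
            ((Subgroup.mem_center_iff.mp negOne_mem_center A)).symm
          rw [hcomm.mul_pow, h]
          obtain ⟨k, hk⟩ := hodd
          have hnp : (negOne : SpecialLinearGroup (Fin 2) F) ^ p = negOne := by
            rw [hk, pow_add, pow_mul, pow_one]
            rw [show (negOne : SpecialLinearGroup (Fin 2) F) ^ 2 = 1 from by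
              rw [pow_two, negOne_mul_negOne]]
            simp
          rw [hnp, negOne_mul_negOne]
  have hB1 : B ≠ 1 := by
    intro h
    rw [h] at hBmk
    exact hA1 (by rw [← hBmk]; rfl)
  obtain ⟨a, ha, hconj⟩ := sl_exists_conj p B hBp hB1
  refine ⟨a, ha, ?_⟩
  have := (QuotientGroup.mk' (Subgroup.center (SpecialLinearGroup (Fin 2) F))).map_isConj hconj
  rw [show (QuotientGroup.mk' (Subgroup.center (SpecialLinearGroup (Fin 2) F))) (t a)
      = T a from rfl] at this
  rw [show (QuotientGroup.mk' (Subgroup.center (SpecialLinearGroup (Fin 2) F))) B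
      = QuotientGroup.mk B from rfl] at this
  rwa [hBmk] at this


lemma nonsquare_mul {a b : F} (ha0 : a ≠ 0) (hb0 : b ≠ 0)
    (ha : ¬IsSquare a) (hb : ¬IsSquare b) : IsSquare (a * b) := by
  letI := Classical.decEq F
  have h1 : quadraticChar F a = -1 := quadraticChar_neg_one_iff_not_isSquare.mpr ha
  have h2 : quadraticChar F b = -1 := quadraticChar_neg_one_iff_not_isSquare.mpr hb
  have h3 : quadraticChar F (a * b) = 1 := by rw [_root_.map_mul, h1, h2]; ring
  exact (quadraticChar_one_iff_isSquare (mul_ne_zero ha0 hb0)).mp h3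

/-- every order-`p` class is the class of `T 1` or of `T u` (for a fixed nonsquare `u`) -/
lemma class_eq (p : ℕ) [Fact p.Prime] [CharP F p] {u : F} (hu0 : u ≠ 0) (hu : ¬IsSquare u)
    (g : PSL(2, F)) (hg : orderOf g = p) :
    ConjClasses.mk g = ConjClasses.mk (T 1 : PSL(2, F)) ∨
      ConjClasses.mk g = ConjClasses.mk (T u : PSL(2, F)) := by
  obtain ⟨a, ha0, hconj⟩ := exists_conj_T p g hg
  by_cases hsq : IsSquare a
  · left
    obtain ⟨s, hs⟩ := hsq
    have hs0 : s ≠ 0 := fun h => ha0 (by rw [hs, h, mul_zero])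
    have h1 : IsConj (T 1 : PSL(2, F)) (T a) := by
      have := isConj_T_sq (1 : F) s hs0
      rwa [show s ^ 2 * 1 = a from by rw [hs]; ring] at this
    rw [ConjClasses.mk_eq_mk_iff_isConj]
    exact (h1.trans hconj).symm
  · right
    obtain ⟨s, hs⟩ := nonsquare_mul ha0 hu0 hsq hu
    have hs0 : s ≠ 0 := by
      intro h
      rw [h, mul_zero] at hs
      exact mul_ne_zero ha0 hu0 hs
    have hx0 : s * u⁻¹ ≠ 0 := mul_ne_zero hs0 (inv_ne_zero hu0)
    have h1 : IsConj (T u : PSL(2, F)) (T a) := by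
      have := isConj_T_sq u (s * u⁻¹) hx0
      rwa [show (s * u⁻¹) ^ 2 * u = a from by
        field_simp
        first
          | linear_combination u * hs
          | linear_combination -u * hs
          | linear_combination 2 * u * hs
          | linear_combination (-2 : F) * u * hs
          | linear_combination -hs] at this
    rw [ConjClasses.mk_eq_mk_iff_isConj]
    exact (h1.trans hconj).symm

lemma class_eq_char_two (p : ℕ) [Fact p.Prime] [CharP F p] (hchar : ringChar F = 2)
    (g : PSL(2, F)) (hg : orderOf g = p) :
    ConjClasses.mk g = ConjClasses.mk (T 1 : PSL(2, F)) := by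
  obtain ⟨a, ha0, hconj⟩ := exists_conj_T p g hg
  obtain ⟨s, hs⟩ := FiniteField.isSquare_of_char_two hchar a
  have hs0 : s ≠ 0 := fun h => ha0 (by rw [hs, h, mul_zero])
  have h1 : IsConj (T 1 : PSL(2, F)) (T a) := by
    have := isConj_T_sq (1 : F) s hs0
    rwa [show s ^ 2 * 1 = a from by rw [hs]; ring] at this
  rw [ConjClasses.mk_eq_mk_iff_isConj]
  exact (h1.trans hconj).symm

end PSLU

/-- Let `q` be a power of a prime `p` and `e = gcd(2, q-1)`. The group `PSL(2,q)` has exactly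
`e` conjugacy classes of elements of order `p` (the unipotent classes). -/
theorem psl_two_card_unipotent_classes (p n q : ℕ) (hp : p.Prime) (hn : n ≠ 0)
    (hq : q = p ^ n) (F : Type) [Field F] [Fintype F] (hF : Fintype.card F = q) :
    Nat.card {c : ConjClasses (Matrix.ProjectiveSpecialLinearGroup (Fin 2) F) //
        ∃ g, ConjClasses.mk g = c ∧ orderOf g = p} = Nat.gcd 2 (q - 1) := by
  haveI := Fact.mk hp
  subst hq
  -- the characteristic of F is p
  have hcharp : CharP F p := by
    obtain ⟨m, hr_prime, hcard⟩ := FiniteField.card F (ringChar F)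
    have hdvd : ringChar F ∣ p ^ n := by
      rw [hF] at hcard
      rw [hcard]
      exact dvd_pow_self _ m.pos.ne'
    have : ringChar F = p :=
      (Nat.prime_dvd_prime_iff_eq hr_prime hp).mp (hr_prime.dvd_of_dvd_pow hdvd)
    exact ringChar.of_eq this
  haveI := hcharp
  have hring : ringChar F = p := ringChar.eq F p
  by_cases hp2 : p = 2
  · -- char 2 : one class
    have hq1 : Nat.gcd 2 (p ^ n - 1) = 1 := by
      have hodd : Odd (p ^ n - 1) := by
        refine Nat.Even.sub_odd (Nat.one_le_pow _ _ hp.pos) ?_ odd_one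
        rw [hp2]
        exact (Nat.even_pow' hn).mpr even_two
      have hnd : ¬ 2 ∣ (p ^ n - 1) := by
        intro hdvd
        rw [Nat.odd_iff] at hodd
        omega
      exact (Nat.prime_two.coprime_iff_not_dvd).mpr hnd
    rw [hq1, Nat.card_eq_one_iff_unique]
    constructor
    · constructor
      rintro ⟨c1, g1, hg1, ho1⟩ ⟨c2, g2, hg2, ho2⟩
      have e1 := PSLU.class_eq_char_two p (hring.trans hp2) g1 ho1
      have e2 := PSLU.class_eq_char_two p (hring.trans hp2) g2 ho2
      exact Subtype.ext ((hg1.symm.trans e1).trans (hg2.symm.trans e2).symm)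
    · exact ⟨⟨ConjClasses.mk (PSLU.T 1), PSLU.T 1, rfl, PSLU.orderOf_T p one_ne_zero⟩⟩
  · -- odd characteristic : two classes
    have hrne2 : ringChar F ≠ 2 := by rw [hring]; exact hp2
    have h2F : (2 : F) ≠ 0 := Ring.two_ne_zero hrne2
    obtain ⟨u, hu⟩ := FiniteField.exists_nonsquare hrne2
    have hu0 : u ≠ 0 := by
      intro h
      apply hu
      rw [h]
      exact ⟨0, (mul_zero 0).symm⟩
    have hq2 : Nat.gcd 2 (p ^ n - 1) = 2 := by
      apply Nat.gcd_eq_left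
      have hodd : Odd (p ^ n) := (hp.odd_of_ne_two hp2).pow
      exact (Nat.Odd.sub_odd hodd odd_one).two_dvd
    rw [hq2]
    rw [Nat.card_eq_two_iff]
    have hne : ConjClasses.mk (PSLU.T 1 : Matrix.ProjectiveSpecialLinearGroup (Fin 2) F)
        ≠ ConjClasses.mk (PSLU.T u) := by
      intro h
      rw [ConjClasses.mk_eq_mk_iff_isConj] at h
      obtain ⟨x, hx0, hxu⟩ := PSLU.isConj_T_rev h2F hu0 h
      exact hu ⟨x, by rw [hxu]; ring⟩
    refine ⟨⟨ConjClasses.mk (PSLU.T 1), PSLU.T 1, rfl, PSLU.orderOf_T p one_ne_zero⟩,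
      ⟨ConjClasses.mk (PSLU.T u), PSLU.T u, rfl, PSLU.orderOf_T p hu0⟩,
      fun h => hne (congrArg Subtype.val h), ?_⟩
    rw [Set.eq_univ_iff_forall]
    rintro ⟨c, g, hgc, hord⟩
    rcases PSLU.class_eq p hu0 hu g hord with h | h
    · left
      exact Subtype.ext (hgc.symm.trans h)
    · right
      simp only [Set.mem_singleton_iff]
      exact Subtype.ext (hgc.symm.trans h)
end

section
/- Every semisimple conjugacy class of PSL(2,q) is real, i.e., closed under taking inverses. Moreover, if g is an element of a semisimple class O with g² ≠ 1, then the centralizer of g inside O (the set of elements of O commuting with g) is exactly {g, g⁻¹}. -/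
open Matrix

namespace PSLAux


variable {F : Type} [Field F]

local notation "M2" => Matrix (Fin 2) (Fin 2) F

/-- Cayley–Hamilton for 2×2 matrices. -/
lemma cayley (A : M2) : A * A = A.trace • A - A.det • 1 := by
  ext i j
  fin_cases i <;> fin_cases j <;>
    simp [Matrix.mul_apply, Fin.sum_univ_two, Matrix.trace_fin_two, Matrix.det_fin_two,
      Matrix.one_apply] <;> ring

lemma det_aux (A : M2) (a b : F) :
    (a • 1 + b • A).det = a^2 + A.trace * a * b + b^2 * A.det := by
  rw [Matrix.det_fin_two, Matrix.trace_fin_two, Matrix.det_fin_two]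
  simp [Matrix.one_apply]
  ring

lemma trace_aux (A : M2) (a b : F) :
    Matrix.trace (a • (1 : M2) + b • A) = a * 2 + b * Matrix.trace A := by
  rw [Matrix.trace_fin_two, Matrix.trace_fin_two]
  simp [Matrix.one_apply]
  ring

lemma comm_aux (A : M2) (a b : F) : (a • 1 + b • A) * A = A * (a • 1 + b • A) := by
  rw [add_mul, mul_add, smul_mul_assoc, smul_mul_assoc, mul_smul_comm, mul_smul_comm,
    one_mul, mul_one]

/-- A non-scalar-forced 2×2 matrix of det 1 is conjugate (by some invertible matrix) to the
companion matrix of its characteristic polynomial. -/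
lemma exists_conj_companion (A : M2) (hdet : A.det = 1) (ht : A.trace ^ 2 ≠ 4) :
    ∃ P : M2, P.det ≠ 0 ∧ A * P = P * !![0, -1; 1, A.trace] := by
  have hd : A 0 0 * A 1 1 - A 0 1 * A 1 0 = 1 := by rwa [Matrix.det_fin_two] at hdet
  have htr : A.trace = A 0 0 + A 1 1 := Matrix.trace_fin_two A
  by_cases hc : A 1 0 ≠ 0
  · refine ⟨!![1, A 0 0; 0, A 1 0], by simpa [Matrix.det_fin_two] using hc, ?_⟩
    ext i j
    fin_cases i <;> fin_cases j <;>
      simp [Matrix.mul_apply, Fin.sum_univ_two, htr] <;>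
      first
        | ring1
        | linear_combination hd
        | linear_combination -hd
        | linear_combination (2 : F) * hd
        | linear_combination (-2 : F) * hd
  push_neg at hc
  by_cases hb : A 0 1 ≠ 0
  · refine ⟨!![0, A 0 1; 1, A 1 1], by simpa [Matrix.det_fin_two] using hb, ?_⟩
    ext i j
    fin_cases i <;> fin_cases j <;>
      simp [Matrix.mul_apply, Fin.sum_univ_two, htr] <;>
      first
        | ring1
        | linear_combination hd
        | linear_combination -hd
        | linear_combination (2 : F) * hd
        | linear_combination (-2 : F) * hd
  push_neg at hb
  have had : A 0 0 ≠ A 1 1 := by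
    intro h
    apply ht
    rw [htr, ← h]
    rw [hb, hc, ← h] at hd
    linear_combination (4 : F) * hd
  refine ⟨!![1, A 0 0; 1, A 1 1], by simp [Matrix.det_fin_two, sub_ne_zero.mpr (Ne.symm had)], ?_⟩
  ext i j
  rw [hb, hc] at hd
  fin_cases i <;> fin_cases j <;>
    simp [Matrix.mul_apply, Fin.sum_univ_two, htr, hb, hc] <;>
    first
      | ring1
      | linear_combination hd
      | linear_combination -hd
      | linear_combination (2 : F) * hd
      | linear_combination (-2 : F) * hd




/-- In a finite field of characteristic two, every element is a square. -/
lemma sq_surj_char_two [Fintype F] (h2 : (2 : F) = 0) (δ : F) : ∃ a : F, a * a = δ := by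
  have hinj : Function.Injective fun x : F => x * x := by
    intro x y hxy
    simp only at hxy
    have h : (x - y) * (x + y) = 0 := by ring_nf; linear_combination hxy
    rcases mul_eq_zero.mp h with h | h
    · exact sub_eq_zero.mp h
    · have : x + y = x - y := by linear_combination y * h2
      exact sub_eq_zero.mp (this ▸ h)
  obtain ⟨a, ha⟩ := (Finite.injective_iff_surjective.mp hinj) δ
  exact ⟨a, ha⟩

/-- If `c` is not a square, then `x*x - c` is a non-square for some `x`. -/
lemma exists_nonsquare_val [Fintype F] (c : F) (hc : ¬ IsSquare c) :
    ∃ x : F, ¬ IsSquare (x * x - c) := by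
  classical
  by_contra hall
  push_neg at hall
  set V : Finset F := Finset.image (fun x : F => x * x) Finset.univ with hV
  have h0V : (0 : F) ∈ V := Finset.mem_image.mpr ⟨0, Finset.mem_univ _, by ring⟩
  have hmap : ∀ s ∈ V, s - c ∈ V.erase 0 := by
    intro s hs
    obtain ⟨x, -, rfl⟩ := Finset.mem_image.mp hs
    refine Finset.mem_erase.mpr ⟨?_, ?_⟩
    · intro h
      exact hc ⟨x, by linear_combination -h⟩
    · obtain ⟨r, hr⟩ := hall x
      exact Finset.mem_image.mpr ⟨r, Finset.mem_univ _, hr.symm⟩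
  have hinj : Set.InjOn (fun s => s - c) V := fun a _ b _ h => by
    simpa using sub_left_injective h
  have hle : V.card ≤ (V.erase 0).card := Finset.card_le_card_of_injOn _ hmap hinj
  have := Finset.card_erase_of_mem h0V
  have hpos : 0 < V.card := Finset.card_pos.mpr ⟨0, h0V⟩
  omega

/-- The norm form `a² + t·a·b + b²` (norm of `F[X]/(X²-tX+1)`) is surjective onto `Fˣ`
whenever `t² ≠ 4`. -/
lemma norm_form_surj [Fintype F] (t δ : F) (ht : t ^ 2 ≠ 4) (hδ : δ ≠ 0) :
    ∃ a b : F, a ^ 2 + t * a * b + b ^ 2 = δ := by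
  classical
  by_cases h2 : (2 : F) = 0
  · obtain ⟨a, ha⟩ := sq_surj_char_two h2 δ
    exact ⟨a, 0, by linear_combination ha⟩
  -- odd characteristic
  have h4 : (4 : F) ≠ 0 := by
    intro h
    exact h2 (by
      have : (2 : F) * 2 = 0 := by linear_combination h
      rcases mul_eq_zero.mp this with h | h <;> exact h)
  set c : F := t ^ 2 / 4 - 1 with hcdef
  have hc0 : c ≠ 0 := by
    intro h
    apply ht
    rw [hcdef] at h
    linear_combination 4 * h - t ^ 2 * mul_inv_cancel₀ h4
  -- reduce to representing δ by x² - c·y²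
  suffices hs : ∃ x y : F, x * x - c * (y * y) = δ by
    obtain ⟨x, y, hxy⟩ := hs
    refine ⟨x - t * y / 2, y, ?_⟩
    field_simp [hcdef] at hxy ⊢
    linear_combination 4 * hxy + (t ^ 2 * y ^ 2) * mul_inv_cancel₀ h4
  by_cases hcsq : IsSquare c
  · obtain ⟨d, hd⟩ := hcsq
    have hd0 : d ≠ 0 := by rintro rfl; exact hc0 (by simpa using hd)
    refine ⟨(1 + δ) / 2, (1 - δ) / (2 * d), ?_⟩
    rw [hd]
    field_simp
    ring
  · obtain ⟨x, hx⟩ := exists_nonsquare_val c hcsq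
    set ν : F := x * x - c with hν
    have hν0 : ν ≠ 0 := by
      intro h
      exact hcsq ⟨x, by linear_combination -h⟩
    by_cases hδsq : IsSquare δ
    · obtain ⟨e, he⟩ := hδsq
      exact ⟨e, 0, by linear_combination -he⟩
    · -- both δ and ν are nonsquares, so δ/ν is a square
      have hmul : IsSquare (δ * ν) := by
        have hδc : quadraticChar F δ = -1 := quadraticChar_neg_one_iff_not_isSquare.mpr hδsq
        have hνc : quadraticChar F ν = -1 := quadraticChar_neg_one_iff_not_isSquare.mpr hx
        have : quadraticChar F (δ * ν) = 1 := by
          rw [_root_.map_mul, hδc, hνc]; ring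
        exact (quadraticChar_one_iff_isSquare (mul_ne_zero hδ hν0)).mp this
      obtain ⟨w, hw⟩ := hmul
      refine ⟨x * (w / ν), w / ν, ?_⟩
      field_simp
      linear_combination (-ν) * hw - w * w * hν




local notation "SL2" => Matrix.SpecialLinearGroup (Fin 2) F


/-- Two elements of `SL(2,F)` with equal trace `t`, `t² ≠ 4`, are conjugate in `SL(2,F)`. -/
lemma isConj_of_trace_eq [Fintype F] (S T : SL2)
    (htr : Matrix.trace (T : M2) = Matrix.trace (S : M2))
    (ht : Matrix.trace (S : M2) ^ 2 ≠ 4) : IsConj S T := by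
  set A : M2 := (S : M2) with hA
  set B : M2 := (T : M2) with hB
  obtain ⟨P₁, hP₁d, hP₁⟩ := exists_conj_companion A S.2 ht
  obtain ⟨P₂, hP₂d, hP₂⟩ := exists_conj_companion B T.2 (by rwa [htr])
  rw [htr] at hP₂
  have hP₁u : IsUnit P₁.det := isUnit_iff_ne_zero.mpr hP₁d
  have h₁ : P₁ * P₁⁻¹ = 1 := Matrix.mul_nonsing_inv _ hP₁u
  have h₁' : P₁⁻¹ * P₁ = 1 := Matrix.nonsing_inv_mul _ hP₁u
  set Q : M2 := P₂ * P₁⁻¹ with hQ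
  have hQA : Q * A = B * Q := by
    have : P₁⁻¹ * A = !![0, -1; 1, Matrix.trace A] * P₁⁻¹ := by
      calc P₁⁻¹ * A = P₁⁻¹ * A * (P₁ * P₁⁻¹) := by rw [h₁, mul_one]
      _ = P₁⁻¹ * (A * P₁) * P₁⁻¹ := by simp only [← mul_assoc]
      _ = P₁⁻¹ * (P₁ * !![0, -1; 1, Matrix.trace A]) * P₁⁻¹ := by rw [hP₁]
      _ = (P₁⁻¹ * P₁) * !![0, -1; 1, Matrix.trace A] * P₁⁻¹ := by
            rw [mul_assoc P₁⁻¹ P₁ !![0, -1; 1, Matrix.trace A]]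
      _ = !![0, -1; 1, Matrix.trace A] * P₁⁻¹ := by rw [h₁', one_mul]
    calc Q * A = P₂ * (P₁⁻¹ * A) := by rw [hQ, mul_assoc]
    _ = P₂ * !![0, -1; 1, Matrix.trace A] * P₁⁻¹ := by rw [this, ← mul_assoc]
    _ = B * Q := by rw [← hP₂, hQ, mul_assoc]
  have hQd : Q.det ≠ 0 := by
    rw [hQ, Matrix.det_mul, Matrix.det_nonsing_inv]
    exact mul_ne_zero hP₂d (by simpa using hP₁d)
  obtain ⟨a, b, hab⟩ := norm_form_surj (Matrix.trace A) Q.det⁻¹ ht (inv_ne_zero hQd)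
  set Z : M2 := a • 1 + b • A with hZ
  have hZd : Z.det = Q.det⁻¹ := by rw [hZ, det_aux, S.2, mul_one]; exact hab
  set W : M2 := Q * Z with hW
  have hWd : W.det = 1 := by
    rw [hW, Matrix.det_mul, hZd, mul_inv_cancel₀ hQd]
  have hZA : Z * A = A * Z := by rw [hZ]; exact comm_aux A a b
  have hWA : W * A = B * W := by
    calc W * A = Q * (Z * A) := by rw [hW, mul_assoc]
    _ = Q * A * Z := by rw [hZA, ← mul_assoc Q A Z]
    _ = B * W := by rw [hQA, hW, mul_assoc]
  obtain ⟨U, hU⟩ : ∃ U : SL2, (U : M2) = W := ⟨⟨W, hWd⟩, rfl⟩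
  refine isConj_iff.mpr ⟨U, ?_⟩
  rw [mul_inv_eq_iff_eq_mul]
  refine Subtype.ext ?_
  simp only [Matrix.SpecialLinearGroup.coe_mul, ← hA, ← hB]
  rw [hU]
  exact hWA

/-- Elements of the center of `SL(2,F)` are `±1`. -/
lemma center_val (z : SL2) (hz : z ∈ Subgroup.center SL2) :
    (z : M2) = 1 ∨ (z : M2) = -1 := by
  obtain ⟨r, hr1, hr⟩ := Matrix.SpecialLinearGroup.mem_center_iff.mp hz
  have : r ^ 2 = 1 := by simpa using hr1
  have : (r - 1) * (r + 1) = 0 := by linear_combination this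
  rcases mul_eq_zero.mp this with h | h
  · left
    rw [← hr, sub_eq_zero.mp h]
    simp
  · right
    rw [← hr, show r = -1 by linear_combination h, map_neg]
    simp

/-- `-1` seen in `SL(2,F)`. -/
def negOne : SL2 := ⟨-1, by simp [Matrix.det_fin_two, Matrix.one_apply]⟩

lemma negOne_mem_center : (negOne : SL2) ∈ Subgroup.center SL2 := by
  refine Subgroup.mem_center_iff.mpr fun g => ?_
  refine Subtype.ext ?_
  rw [Matrix.SpecialLinearGroup.coe_mul, Matrix.SpecialLinearGroup.coe_mul]
  show (g : M2) * (-1) = (-1) * (g : M2)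
  simp

/-- Any matrix commuting with a matrix that is not scalar is a combination `a•1 + b•A`. -/
lemma centralizer_span {A T : M2}
    (hns : ¬(A 0 1 = 0 ∧ A 1 0 = 0 ∧ A 0 0 = A 1 1))
    (hcomm : A * T = T * A) : ∃ a b : F, T = a • 1 + b • A := by
  have key : ∀ i j, A i 0 * T 0 j + A i 1 * T 1 j = T i 0 * A 0 j + T i 1 * A 1 j := by
    intro i j
    have h1 : (A * T) i j = (T * A) i j := by rw [hcomm]
    simpa [Matrix.mul_apply, Fin.sum_univ_two] using h1
  have E1 := key 0 0
  have E2 := key 0 1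
  have E3 := key 1 0
  by_cases hβ : A 0 1 ≠ 0
  · refine ⟨T 0 0 - T 0 1 / A 0 1 * A 0 0, T 0 1 / A 0 1, ?_⟩
    ext i j
    fin_cases i <;> fin_cases j <;> simp [Matrix.one_apply] <;> field_simp <;>
      first
        | ring1
        | linear_combination E1
        | linear_combination -E1
        | linear_combination E2
        | linear_combination -E2
  push_neg at hβ
  by_cases hγ : A 1 0 ≠ 0
  · refine ⟨T 0 0 - T 1 0 / A 1 0 * A 0 0, T 1 0 / A 1 0, ?_⟩
    have hT01 : T 0 1 = 0 := by
      rw [hβ] at E1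
      have : T 0 1 * A 1 0 = 0 := by linear_combination -E1
      rcases mul_eq_zero.mp this with h | h
      · exact h
      · exact absurd h hγ
    ext i j
    fin_cases i <;> fin_cases j <;> simp [Matrix.one_apply, hβ, hT01] <;> field_simp <;>
      first
        | ring1
        | linear_combination E3
        | linear_combination -E3
  push_neg at hγ
  have had : A 0 0 - A 1 1 ≠ 0 := by
    intro h
    exact hns ⟨hβ, hγ, by linear_combination h⟩
  have hT01 : T 0 1 = 0 := by
    rw [hβ] at E2
    have : T 0 1 * (A 0 0 - A 1 1) = 0 := by linear_combination E2
    rcases mul_eq_zero.mp this with h | h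
    · exact h
    · exact absurd h had
  have hT10 : T 1 0 = 0 := by
    rw [hγ] at E3
    have : T 1 0 * (A 0 0 - A 1 1) = 0 := by linear_combination -E3
    rcases mul_eq_zero.mp this with h | h
    · exact h
    · exact absurd h had
  refine ⟨T 0 0 - (T 0 0 - T 1 1) / (A 0 0 - A 1 1) * A 0 0, (T 0 0 - T 1 1) / (A 0 0 - A 1 1), ?_⟩
  ext i j
  fin_cases i <;> fin_cases j <;> simp [Matrix.one_apply, hβ, hγ, hT01, hT10] <;> field_simp <;>
    ring1



lemma inv_coe_eq (S : SL2) :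
    ((S⁻¹ : SL2) : M2) = Matrix.trace ((S : M2)) • (1 : M2) - (S : M2) := by
  rw [Matrix.SpecialLinearGroup.coe_inv, Matrix.adjugate_fin_two]
  ext i j
  fin_cases i <;> fin_cases j <;>
    simp [Matrix.trace_fin_two, Matrix.one_apply]

lemma trace_inv (S : SL2) :
    Matrix.trace ((S⁻¹ : SL2) : M2) = Matrix.trace ((S : M2)) := by
  rw [Matrix.SpecialLinearGroup.coe_inv, Matrix.adjugate_fin_two]
  simp [Matrix.trace_fin_two]
  ring

/-- If the image of `S` in `PSL(2,F)` is nontrivial of order coprime to the characteristic,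
then its trace squared is not 4. -/
lemma trace_sq_ne [Fintype F] (p n : ℕ) (hp : p.Prime) (hn : n ≠ 0)
    (hF : Fintype.card F = p ^ n) (S : SL2)
    (hg : QuotientGroup.mk' (Subgroup.center SL2) S ≠ 1)
    (hss : Nat.Coprime (orderOf (QuotientGroup.mk' (Subgroup.center SL2) S)) p) :
    Matrix.trace ((S : M2)) ^ 2 ≠ 4 := by
  intro h4
  haveI hcharP : CharP F (ringChar F) := ringChar.charP F
  have hchprime : (ringChar F).Prime := CharP.char_is_prime F (ringChar F)
  obtain ⟨m, -, hm⟩ := FiniteField.card F (ringChar F)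
  have hrp : ringChar F = p := by
    have hdvd : p ∣ ringChar F ^ (m : ℕ) := by
      rw [← hm, hF]; exact dvd_pow_self p hn
    exact ((Nat.prime_dvd_prime_iff_eq hp hchprime).mp (hp.dvd_of_dvd_pow hdvd)).symm
  haveI hCP : CharP F p := hrp ▸ hcharP
  have hpF : (p : F) = 0 := CharP.cast_eq_zero F p
  set A : M2 := (S : M2) with hA
  obtain ⟨ε, hε1, hεt⟩ : ∃ ε : F, ε * ε = 1 ∧ Matrix.trace A = ε * 2 := by
    have : (Matrix.trace A - 2) * (Matrix.trace A + 2) = 0 := by linear_combination h4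
    rcases mul_eq_zero.mp this with h | h
    · exact ⟨1, by ring, by linear_combination h⟩
    · exact ⟨-1, by ring, by linear_combination h⟩
  obtain ⟨N, hN⟩ : ∃ N : M2, N = ε • A - 1 := ⟨_, rfl⟩
  have hNN : N * N = 0 := by
    have hA2 := cayley A
    rw [S.2, hεt] at hA2
    rw [hN, sub_mul, mul_sub, mul_sub, one_mul, mul_one, smul_mul_assoc, mul_smul_comm,
      smul_smul, hA2, hε1]
    ext i j
    simp [Matrix.sub_apply, Matrix.smul_apply, Matrix.one_apply]
    ring
  have key : ∀ k : ℕ, (1 + N) ^ k = 1 + (k : F) • N := by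
    intro k
    induction k with
    | zero => simp
    | succ k ih =>
      rw [pow_succ, ih]
      have hexp : (1 + (k : F) • N) * (1 + N) = 1 + (k : F) • N + N + (k : F) • (N * N) := by
        simp only [mul_add, add_mul, mul_one, one_mul, smul_mul_assoc]
        abel
      rw [hexp, hNN, smul_zero, add_zero]
      push_cast
      rw [add_smul, one_smul]
      abel
  have hεA : ε • A = 1 + N := by rw [hN]; abel
  have hApow : A ^ p = ε ^ p • 1 := by
    have h1 : (ε • A) ^ p = 1 := by
      rw [hεA, key p, hpF, zero_smul, add_zero]
    rw [smul_pow] at h1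
    have h2 := congrArg (fun X : M2 => ε ^ p • X) h1
    simp only [smul_smul, ← mul_pow, hε1, one_pow, one_smul] at h2
    exact h2
  have hSp : S ^ p ∈ Subgroup.center SL2 := by
    rw [Matrix.SpecialLinearGroup.mem_center_iff]
    refine ⟨ε ^ p, ?_, ?_⟩
    · rw [Fintype.card_fin, ← pow_mul, mul_comm, pow_mul, sq, hε1, one_pow]
    · rw [Matrix.SpecialLinearGroup.coe_pow, ← hA, hApow]
      ext i j
      simp [Matrix.scalar_apply, Matrix.one_apply, Matrix.diagonal]
  have hgp : (QuotientGroup.mk' (Subgroup.center SL2) S) ^ p = 1 := by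
    rw [← map_pow]
    exact (QuotientGroup.eq_one_iff _).mpr hSp
  rcases hp.eq_one_or_self_of_dvd _ (orderOf_dvd_of_pow_eq_one hgp) with h1 | hper
  · exact hg (orderOf_eq_one_iff.mp h1)
  · rw [hper] at hss
    rw [Nat.Coprime, Nat.gcd_self] at hss
    exact hp.one_lt.ne' hss

end PSLAux

/-- Every semisimple conjugacy class of `PSL(2,q)` is real (closed under inverses), and if `g` is
an element of a semisimple class with `g² ≠ 1`, then the set of elements of the class commuting
with `g` is exactly `{g, g⁻¹}`. A nontrivial element is semisimple iff its order is coprime to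
the characteristic. -/
theorem psl_two_semisimple_class_real_and_centralizer (p n q : ℕ) (hp : p.Prime) (hn : n ≠ 0)
    (hq : q = p ^ n) (F : Type) [Field F] [Fintype F] (hF : Fintype.card F = q)
    (g : Matrix.ProjectiveSpecialLinearGroup (Fin 2) F) (hg : g ≠ 1)
    (hss : Nat.Coprime (orderOf g) p) :
    (∀ h, IsConj g h → IsConj g h⁻¹) ∧
      (g ^ 2 ≠ 1 → {h | IsConj g h ∧ Commute g h} = {g, g⁻¹}) := by
  subst hq
  obtain ⟨S, rfl⟩ := QuotientGroup.mk'_surjective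
    (Subgroup.center (Matrix.SpecialLinearGroup (Fin 2) F)) g
  set π := QuotientGroup.mk' (Subgroup.center (Matrix.SpecialLinearGroup (Fin 2) F)) with hπ
  have ht := PSLAux.trace_sq_ne p n hp hn hF S hg hss
  have hreal : IsConj (π S) (π S)⁻¹ := by
    have h1 : IsConj S S⁻¹ := PSLAux.isConj_of_trace_eq S S⁻¹ (PSLAux.trace_inv S) ht
    simpa using π.map_isConj h1
  refine ⟨?_, ?_⟩
  · intro h hconj
    obtain ⟨c, hc⟩ := isConj_iff.mp hconj
    have h2 : IsConj (π S)⁻¹ h⁻¹ := by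
      rw [← hc]
      exact isConj_iff.mpr ⟨c, by group⟩
    exact hreal.trans h2
  · intro hg2
    ext h
    simp only [Set.mem_setOf_eq, Set.mem_insert_iff, Set.mem_singleton_iff]
    constructor
    · rintro ⟨hconj, hcomm⟩
      obtain ⟨c, hc⟩ := isConj_iff.mp hconj
      obtain ⟨c₀, rfl⟩ := QuotientGroup.mk'_surjective _ c
      obtain ⟨T, hT⟩ : ∃ T : Matrix.SpecialLinearGroup (Fin 2) F, T = c₀ * S * c₀⁻¹ :=
        ⟨_, rfl⟩
      have hhT : h = π T := by
        rw [← hc, hT, hπ]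
        simp only [_root_.map_mul, map_inv]
      obtain ⟨A, hA⟩ : ∃ A : Matrix (Fin 2) (Fin 2) F, A = (S : Matrix (Fin 2) (Fin 2) F) :=
        ⟨_, rfl⟩
      obtain ⟨B, hB⟩ : ∃ B : Matrix (Fin 2) (Fin 2) F, B = (T : Matrix (Fin 2) (Fin 2) F) :=
        ⟨_, rfl⟩
      rw [← hA] at ht
      have hdetA : A.det = 1 := by rw [hA]; exact S.2
      have hinv : ((c₀⁻¹ : Matrix.SpecialLinearGroup (Fin 2) F) :
          Matrix (Fin 2) (Fin 2) F) * (c₀ : Matrix (Fin 2) (Fin 2) F) = 1 := by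
        rw [← Matrix.SpecialLinearGroup.coe_mul, inv_mul_cancel,
          Matrix.SpecialLinearGroup.coe_one]
      have htrT : Matrix.trace B = Matrix.trace A := by
        rw [hB, hT, hA]
        simp only [Matrix.SpecialLinearGroup.coe_mul]
        rw [Matrix.trace_mul_comm, ← mul_assoc, hinv, one_mul]
      -- from commuting in PSL: S*T = ±T*S
      have hcomm' : π (S * T) = π (T * S) := by
        have hx : π S * π T = π T * π S := by rw [← hhT]; exact hcomm
        rw [_root_.map_mul, _root_.map_mul]
        exact hx
      obtain ⟨z, hzmem, hz⟩ := (QuotientGroup.mk'_eq_mk' _).mp hcomm'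
      have hzval := congrArg (Subtype.val) hz
      simp only [Matrix.SpecialLinearGroup.coe_mul, ← hA, ← hB] at hzval
      -- hzval : A * B * ↑z = B * A
      have hAB : A * B = B * A := by
        rcases PSLAux.center_val z hzmem with hz1 | hz1
        · rw [hz1, mul_one] at hzval
          exact hzval
        · rw [hz1, mul_neg, mul_one] at hzval
          -- hzval : -(A * B) = B * A
          by_cases h2 : (2 : F) = 0
          · have hneg : ∀ x : F, -x = x := fun x => by linear_combination -x * h2
            rw [← hzval]
            ext i j
            simp only [Matrix.neg_apply]
            rw [hneg]
          · exfalso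
            have hAA' : A * ((S⁻¹ : Matrix.SpecialLinearGroup (Fin 2) F) :
                Matrix (Fin 2) (Fin 2) F) = 1 := by
              rw [hA, ← Matrix.SpecialLinearGroup.coe_mul, mul_inv_cancel,
                Matrix.SpecialLinearGroup.coe_one]
            have hA'A : ((S⁻¹ : Matrix.SpecialLinearGroup (Fin 2) F) :
                Matrix (Fin 2) (Fin 2) F) * A = 1 := by
              rw [hA, ← Matrix.SpecialLinearGroup.coe_mul, inv_mul_cancel,
                Matrix.SpecialLinearGroup.coe_one]
            obtain ⟨A', hA'⟩ : ∃ A' : Matrix (Fin 2) (Fin 2) F,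
                A' = ((S⁻¹ : Matrix.SpecialLinearGroup (Fin 2) F) :
                  Matrix (Fin 2) (Fin 2) F) := ⟨_, rfl⟩
            rw [← hA'] at hAA' hA'A
            have e1 : Matrix.trace B = - Matrix.trace B := by
              calc Matrix.trace B = Matrix.trace (B * (A * A')) := by rw [hAA', mul_one]
              _ = Matrix.trace ((B * A) * A') := by rw [mul_assoc]
              _ = Matrix.trace ((-(A * B)) * A') := by rw [hzval]
              _ = - Matrix.trace ((A * B) * A') := by rw [neg_mul, Matrix.trace_neg]
              _ = - Matrix.trace (A' * (A * B)) := by rw [Matrix.trace_mul_comm]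
              _ = - Matrix.trace ((A' * A) * B) := by rw [mul_assoc]
              _ = - Matrix.trace B := by rw [hA'A, one_mul]
            have htr0 : Matrix.trace A = 0 := by
              rw [← htrT]
              have h0 : Matrix.trace B * 2 = 0 := by linear_combination e1
              rcases mul_eq_zero.mp h0 with h' | h'
              · exact h'
              · exact absurd h' h2
            have hS2 : A * A = -1 := by
              rw [PSLAux.cayley A, htr0, hdetA, zero_smul, one_smul, zero_sub]
            apply hg2
            have hSneg : S ^ 2 = PSLAux.negOne := by
              apply Subtype.ext
              rw [Matrix.SpecialLinearGroup.coe_pow, pow_two, ← hA, hS2]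
              rfl
            rw [← map_pow, hSneg]
            exact (QuotientGroup.eq_one_iff _).mpr PSLAux.negOne_mem_center
      -- commuting case: B is a polynomial in A
      have hns : ¬(A 0 1 = 0 ∧ A 1 0 = 0 ∧ A 0 0 = A 1 1) := by
        rintro ⟨h01, h10, hdiag⟩
        apply ht
        have hdet : A 0 0 * A 1 1 - A 0 1 * A 1 0 = 1 := by
          rw [← Matrix.det_fin_two]; exact hdetA
        rw [h01, h10, hdiag] at hdet
        rw [Matrix.trace_fin_two, hdiag]
        linear_combination 4 * hdet
      obtain ⟨a, b, hBab⟩ := PSLAux.centralizer_span hns hAB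
      have hdet1 : a ^ 2 + Matrix.trace A * a * b + b ^ 2 = 1 := by
        have hdb : B.det = 1 := by rw [hB]; exact T.2
        rw [hBab, PSLAux.det_aux, hdetA, mul_one] at hdb
        exact hdb
      have htr2 : a * 2 + b * Matrix.trace A = Matrix.trace A := by
        have h0 := htrT
        rw [hBab, PSLAux.trace_aux] at h0
        exact h0
      -- conclude B = A or B = trace A • 1 - A
      have hfin : B = A ∨ B = Matrix.trace A • (1 : Matrix (Fin 2) (Fin 2) F) - A := by
        by_cases h2 : (2 : F) = 0
        · have h4 : (4 : F) = 0 := by linear_combination (2 : F) * h2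
          have ht0 : Matrix.trace A ≠ 0 := by
            intro h0
            exact ht (by rw [h0, h4]; ring)
          have hnegM : ∀ X : Matrix (Fin 2) (Fin 2) F, -X = X := fun X => by
            ext i j
            simp only [Matrix.neg_apply]
            linear_combination -(X i j) * h2
          have hb1 : b = 1 := by
            have ha2 : a * 2 = 0 := by rw [h2, mul_zero]
            have hx : (b - 1) * Matrix.trace A = 0 := by linear_combination htr2 - ha2
            rcases mul_eq_zero.mp hx with h' | h'
            · linear_combination h'
            · exact absurd h' ht0
          rw [hb1] at hdet1
          have hx : a * (a + Matrix.trace A) = 0 := by linear_combination hdet1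
          rcases mul_eq_zero.mp hx with h' | h'
          · left
            rw [hBab, hb1, h', zero_smul, one_smul, zero_add]
          · right
            have ha : a = -Matrix.trace A := by linear_combination h'
            rw [hBab, hb1, one_smul, ha, neg_smul, hnegM (Matrix.trace A • 1),
              sub_eq_add_neg, hnegM A]
        · have hb2 : (Matrix.trace A ^ 2 - 4) * (b ^ 2 - 1) = 0 := by
            linear_combination (2 * a + Matrix.trace A * b + Matrix.trace A) * htr2
              - 4 * hdet1
          have hbsq : b ^ 2 - 1 = 0 := by
            rcases mul_eq_zero.mp hb2 with h' | h'
            · exact absurd (by linear_combination h' : Matrix.trace A ^ 2 = 4) ht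
            · exact h'
          have : (b - 1) * (b + 1) = 0 := by linear_combination hbsq
          rcases mul_eq_zero.mp this with h' | h'
          · -- b = 1, a = 0
            have hb1 : b = 1 := by linear_combination h'
            have ha0 : a = 0 := by
              have hx : a * 2 = 0 := by linear_combination htr2 - Matrix.trace A * h'
              rcases mul_eq_zero.mp hx with h'' | h''
              · exact h''
              · exact absurd h'' h2
            left
            rw [hBab, ha0, hb1, zero_smul, one_smul, zero_add]
          · -- b = -1, a = trace A
            have hb1 : b = -1 := by linear_combination h'
            have hat : a = Matrix.trace A := by
              have h0 : a * 2 = Matrix.trace A * 2 := by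
                linear_combination htr2 - Matrix.trace A * h'
              exact mul_right_cancel₀ h2 h0
            right
            rw [hBab, hat, hb1, neg_smul, one_smul]
            abel
      rcases hfin with hBA | hBA
      · left
        have hTS : T = S := Subtype.ext (by rw [← hB, ← hA]; exact hBA)
        rw [hhT, hTS]
      · right
        have hTS : T = S⁻¹ := Subtype.ext (by rw [← hB, PSLAux.inv_coe_eq, ← hA]; exact hBA)
        rw [hhT, hTS, map_inv]
    · rintro (rfl | rfl)
      · exact ⟨IsConj.refl _, Commute.refl _⟩
      · exact ⟨hreal, (Commute.refl (π S)).inv_right⟩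
end

section
/- Let X be a rack and f : X → H an injective rack homomorphism into a group H (with H a rack under conjugation). Then the kernel of the induced group homomorphism f̄ : Ass(X) → H is contained in the center of Ass(X). -/
open Quandles

private lemma envel_closure_range (R : Type) [Rack R] :
    Subgroup.closure (Set.range (Rack.toEnvelGroup R)) = (⊤ : Subgroup (Rack.EnvelGroup R)) := by
  rw [eq_top_iff]
  intro g _
  induction g using Quotient.inductionOn with
  | h a =>
    induction a with
    | unit => exact one_mem _
    | incl x => exact Subgroup.subset_closure ⟨x, rfl⟩
    | mul a b ha hb => exact mul_mem (ha trivial) (hb trivial)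
    | inv a ha => exact inv_mem (ha trivial)

private lemma envel_conj_eq (R : Type) [Rack R] (g : Rack.EnvelGroup R) (y : R) :
    g * Rack.toEnvelGroup R y * g⁻¹ = Rack.toEnvelGroup R (Rack.envelAction g y) := by
  have := envel_closure_range R
  have hg : g ∈ Subgroup.closure (Set.range (Rack.toEnvelGroup R)) := by
    rw [this]; trivial
  induction hg using Subgroup.closure_induction generalizing y with
  | mem a ha =>
    obtain ⟨x, rfl⟩ := ha
    have := (Rack.toEnvelGroup R).map_act' (x := x) (y := y)
    rw [Rack.envelAction_prop]
    exact this.symm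
  | one => simp
  | mul a b _ _ ha hb =>
    rw [map_mul, mul_inv_rev]
    calc a * b * Rack.toEnvelGroup R y * (b⁻¹ * a⁻¹)
        = a * (b * Rack.toEnvelGroup R y * b⁻¹) * a⁻¹ := by group
      _ = a * Rack.toEnvelGroup R (Rack.envelAction b y) * a⁻¹ := by rw [hb]
      _ = _ := by rw [ha]; rfl
  | inv a _ ha =>
    have := ha (Rack.envelAction a⁻¹ y)
    rw [show Rack.envelAction a (Rack.envelAction a⁻¹ y) = y by
      rw [← Equiv.Perm.mul_apply, ← map_mul, mul_inv_cancel]; simp] at this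
    rw [← this]; group

/-- If `f : X → H` is an injective rack homomorphism from a rack `X` to a group `H` (a rack under
conjugation), then the kernel of the induced group homomorphism `f̄ : Ass(X) → H` is contained in
the center of `Ass(X)`. -/
theorem envelGroup_ker_le_center (R : Type) [Rack R] (H : Type) [Group H]
    (f : R → H) (hf : ∀ x y : R, f (x ◃ y) = f x * f y * (f x)⁻¹)
    (hinj : Function.Injective f)
    (F : Rack.EnvelGroup R →* H) (hF : ∀ x : R, F (Rack.toEnvelGroup R x) = f x) :
    ∀ g : Rack.EnvelGroup R, F g = 1 → g ∈ Subgroup.center (Rack.EnvelGroup R) := by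
  intro g hg
  have hcomm : ∀ y : R, g * Rack.toEnvelGroup R y = Rack.toEnvelGroup R y * g := by
    intro y
    have h1 : F (g * Rack.toEnvelGroup R y * g⁻¹) = f y := by
      simp [hg, hF]
    have h2 : F (g * Rack.toEnvelGroup R y * g⁻¹) = f (Rack.envelAction g y) := by
      rw [envel_conj_eq, hF]
    have h3 : Rack.envelAction g y = y := hinj (h2.symm.trans h1)
    have := envel_conj_eq R g y
    rw [h3] at this
    calc g * Rack.toEnvelGroup R y = g * Rack.toEnvelGroup R y * g⁻¹ * g := by group
      _ = Rack.toEnvelGroup R y * g := by rw [this]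
  rw [Subgroup.mem_center_iff]
  intro h
  have hh : h ∈ Subgroup.closure (Set.range (Rack.toEnvelGroup R)) := by
    rw [envel_closure_range]; trivial
  induction hh using Subgroup.closure_induction with
  | mem a ha => obtain ⟨x, rfl⟩ := ha; exact (hcomm x).symm
  | one => simp
  | mul a b _ _ ha hb => rw [mul_assoc, hb, ← mul_assoc, ha, mul_assoc]
  | inv a _ ha =>
    calc a⁻¹ * g = a⁻¹ * g * a * a⁻¹ := by group
      _ = a⁻¹ * (a * g) * a⁻¹ := by rw [mul_assoc _ g a, ← ha]
      _ = g * a⁻¹ := by group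
end

section
/- Let G be a group generated by a conjugacy class X, F_X the free group on X, π : F_X → G the canonical homomorphism with kernel R_X, and R_0 the normal subgroup generated by the elements g_x g_y g_x⁻¹ g_{x▷y}⁻¹ for x,y ∈ X (where x▷y = xyx⁻¹ in G). Then [R_X, F_X] ⊆ R_0 ⊆ R_X. -/
/-- Let `G` be a group generated by a conjugacy class `X`, `F_X` the free group on `X`,
`π : F_X → G` the canonical homomorphism with kernel `R_X`, and `R_0` the normal subgroup
generated by the elements `g_x g_y g_x⁻¹ g_{x▷y}⁻¹` for `x, y ∈ X` (with `x ▷ y = x y x⁻¹`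
computed in `G`). Then `[R_X, F_X] ⊆ R_0 ⊆ R_X`. -/
theorem commutator_ker_le_rack_relations (G : Type) [Group G] (X : Set G) (g₀ : G)
    (hX : X = {h | IsConj g₀ h}) (hgen : Subgroup.closure X = ⊤) :
    ∀ (π : FreeGroup X →* G), (∀ x : X, π (FreeGroup.of x) = (x : G)) →
    ∀ (R0 : Subgroup (FreeGroup X)),
      R0 = Subgroup.normalClosure
        {w : FreeGroup X | ∃ x y z : X, (z : G) = (x : G) * (y : G) * (x : G)⁻¹ ∧
          w = FreeGroup.of x * FreeGroup.of y * (FreeGroup.of x)⁻¹ * (FreeGroup.of z)⁻¹} →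
      ⁅π.ker, (⊤ : Subgroup (FreeGroup X))⁆ ≤ R0 ∧ R0 ≤ π.ker := by
  intro π hπ R0 hR0
  subst hR0
  set S : Set (FreeGroup X) :=
    {w : FreeGroup X | ∃ x y z : X, (z : G) = (x : G) * (y : G) * (x : G)⁻¹ ∧
      w = FreeGroup.of x * FreeGroup.of y * (FreeGroup.of x)⁻¹ * (FreeGroup.of z)⁻¹} with hS
  -- conjugation stays in X
  have hc : ∀ (g a : G), a ∈ X → g * a * g⁻¹ ∈ X := by
    intro g a ha
    rw [hX] at ha ⊢
    exact ha.trans (isConj_iff.mpr ⟨g, rfl⟩)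
  let c : G → X → X := fun g y => ⟨g * (y : G) * g⁻¹, hc g y y.2⟩
  let mk : FreeGroup X →* FreeGroup X ⧸ Subgroup.normalClosure S :=
    QuotientGroup.mk' _
  -- relation in the quotient
  have hrel : ∀ x y : X, mk (FreeGroup.of x * FreeGroup.of y * (FreeGroup.of x)⁻¹)
      = mk (FreeGroup.of (c (x : G) y)) := by
    intro x y
    have hmem : FreeGroup.of x * FreeGroup.of y * (FreeGroup.of x)⁻¹ *
        (FreeGroup.of (c (x : G) y))⁻¹ ∈ Subgroup.normalClosure S :=
      Subgroup.subset_normalClosure ⟨x, y, c (x : G) y, rfl, rfl⟩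
    have h1 : mk (FreeGroup.of x * FreeGroup.of y * (FreeGroup.of x)⁻¹ *
        (FreeGroup.of (c (x : G) y))⁻¹) = 1 := (QuotientGroup.eq_one_iff _).mpr hmem
    rw [map_mul, map_inv] at h1
    exact mul_inv_eq_one.mp h1
  have key : ∀ w : FreeGroup X, ∀ y : X,
      mk (w * FreeGroup.of y * w⁻¹) = mk (FreeGroup.of (c (π w) y)) := by
    intro w
    induction w with
    | C1 =>
      intro y
      have h : c (π 1) y = y := Subtype.ext (by simp [c])
      rw [h]
      simp
    | of x =>
      intro y
      show mk (FreeGroup.of x * FreeGroup.of y * (FreeGroup.of x)⁻¹)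
          = mk (FreeGroup.of (c (π (FreeGroup.of x)) y))
      rw [hπ x]
      exact hrel x y
    | inv_of x _ =>
      intro y
      have h1 := hrel x (c ((x : G))⁻¹ y)
      have h2 : c (x : G) (c ((x : G))⁻¹ y) = y := Subtype.ext (by simp [c]; group)
      rw [h2] at h1
      have h3 : mk ((FreeGroup.of x)⁻¹ * FreeGroup.of y * FreeGroup.of x)
          = mk (FreeGroup.of (c ((x : G))⁻¹ y)) := by
        simp only [map_mul, map_inv] at h1 ⊢
        rw [← h1]; group
      have h4 : c (π (FreeGroup.of x)⁻¹) y = c ((x : G))⁻¹ y := by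
        rw [map_inv, hπ x]
      show mk ((FreeGroup.of x)⁻¹ * FreeGroup.of y * (FreeGroup.of x)⁻¹⁻¹)
          = mk (FreeGroup.of (c (π (FreeGroup.of x)⁻¹) y))
      rw [h4, inv_inv]
      exact h3
    | mul u v hu hv =>
      intro y
      have h0 : mk (u * v * FreeGroup.of y * (u * v)⁻¹)
          = mk (u * (v * FreeGroup.of y * v⁻¹) * u⁻¹) := by group
      rw [h0]
      calc mk (u * (v * FreeGroup.of y * v⁻¹) * u⁻¹)
          = mk u * mk (v * FreeGroup.of y * v⁻¹) * (mk u)⁻¹ := by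
            simp [map_mul, map_inv]
        _ = mk u * mk (FreeGroup.of (c (π v) y)) * (mk u)⁻¹ := by rw [hv y]
        _ = mk (u * FreeGroup.of (c (π v) y) * u⁻¹) := by simp [map_mul, map_inv]
        _ = mk (FreeGroup.of (c (π u) (c (π v) y))) := hu _
        _ = mk (FreeGroup.of (c (π (u * v)) y)) := by
            congr 2
            refine Subtype.ext ?_
            simp only [c, map_mul]
            group
  constructor
  · -- commutator part
    rw [Subgroup.commutator_le]
    intro r hr w _
    have hcomm : ∀ v : FreeGroup X, Commute (mk r) (mk v) := by
      intro v
      induction v with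
      | C1 => simpa using Commute.one_right (mk r)
      | of x =>
        have h5 := key r x
        rw [(show π r = 1 from hr)] at h5
        have hcy : c (1 : G) x = x := Subtype.ext (by simp [c])
        rw [hcy] at h5
        simp only [map_mul, map_inv] at h5
        exact mul_inv_eq_iff_eq_mul.mp h5
      | inv_of x h => simpa [map_inv] using h.inv_right
      | mul u v hu hv => simpa [map_mul] using hu.mul_right hv
    open scoped commutatorElement in
    have h8 : mk ⁅r, w⁆ = ⁅mk r, mk w⁆ := by
      simp [commutatorElement_def, map_mul, map_inv]
    exact (QuotientGroup.eq_one_iff _).mp (h8.trans (hcomm w).commutator_eq)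
  · -- R0 ≤ ker
    apply Subgroup.normalClosure_le_normal
    rintro w ⟨x, y, z, hz, rfl⟩
    simp only [SetLike.mem_coe, MonoidHom.mem_ker, map_mul, map_inv, hπ]
    rw [hz]
    group
end

section
/- Let G be a group generated by a conjugacy class X, viewed as a rack under conjugation, and let d : Ass(X) → ℤ be the homomorphism sending each generator g_x to 1. Then the commutator subgroup [Ass(X), Ass(X)] equals the kernel of d. -/
open Quandles

/-- The conjugacy class of `g₀` in `G`, as a set with its conjugation rack structure. -/
def ConjClassOf (G : Type*) [Group G] (g₀ : G) : Type _ := {h : G // IsConj g₀ h}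

namespace ConjClassOf

variable {G : Type*} [Group G] {g₀ : G}

instance : Rack (ConjClassOf G g₀) where
  act x y := ⟨x.1 * y.1 * x.1⁻¹, y.2.trans (isConj_iff.mpr ⟨x.1, rfl⟩)⟩
  self_distrib := by
    intro x y z
    apply Subtype.ext
    simp only []
    group
  invAct x y := ⟨x.1⁻¹ * y.1 * x.1, y.2.trans (isConj_iff.mpr ⟨x.1⁻¹, by group⟩)⟩
  left_inv := by
    intro x y
    apply Subtype.ext
    simp only [Shelf.act]
    group
  right_inv := by
    intro x y
    apply Subtype.ext
    simp only [Shelf.act]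
    group

end ConjClassOf

theorem envelGroup_closure_range (R : Type*) [Rack R] :
    Subgroup.closure (Set.range (Rack.toEnvelGroup R)) = ⊤ := by
  rw [eq_top_iff]
  intro w _
  refine Quotient.inductionOn w ?_
  intro a
  induction a with
  | unit => exact Subgroup.one_mem _
  | incl x => exact Subgroup.subset_closure ⟨x, rfl⟩
  | mul a b iha ihb => exact Subgroup.mul_mem _ iha ihb
  | inv a iha => exact Subgroup.inv_mem _ iha


/-- Let `G` be a group generated by a conjugacy class `X` (viewed as a rack under conjugation) and
`d : Ass(X) → ℤ` the homomorphism sending each generator `g_x` to `1`. Then the commutator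
subgroup of `Ass(X)` equals the kernel of `d`. -/
theorem commutator_envelGroup_eq_ker_degree (G : Type) [Group G] (g₀ : G)
    (hgen : Subgroup.closure {h | IsConj g₀ h} = ⊤)
    (d : Rack.EnvelGroup (ConjClassOf G g₀) →* Multiplicative ℤ)
    (hd : ∀ x : ConjClassOf G g₀,
      d (Rack.toEnvelGroup (ConjClassOf G g₀) x) = Multiplicative.ofAdd 1) :
    commutator (Rack.EnvelGroup (ConjClassOf G g₀)) = d.ker := by
  set R := ConjClassOf G g₀
  set Q := Rack.EnvelGroup R
  set g : R → Q := fun x => Rack.toEnvelGroup R x with hg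
  set π : Q →* Abelianization Q := Abelianization.of with hπ
  -- the rack action relation in the enveloping group
  have hact : ∀ x y : R, g (x ◃ y) = g x * g y * (g x)⁻¹ := fun x y =>
    (Rack.toEnvelGroup R).map_act
  have hπact : ∀ x y : R, π (g (x ◃ y)) = π (g y) := by
    intro x y
    rw [hact, map_mul, map_mul, map_inv, mul_comm (π (g x)), mul_assoc,
      mul_inv_cancel, mul_one]
  -- the subgroup of c ∈ G that conjugate fibers without changing π ∘ g
  let T : Subgroup G :=
    { carrier := {c | ∀ x : R, π (g ⟨c * x.1 * c⁻¹, x.2.trans (isConj_iff.mpr ⟨c, rfl⟩)⟩)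
        = π (g x)}
      one_mem' := by
        intro x
        congr 1
        congr 1
        apply Subtype.ext
        simp
      mul_mem' := by
        intro a b ha hb x
        have h1 := ha ⟨b * x.1 * b⁻¹, x.2.trans (isConj_iff.mpr ⟨b, rfl⟩)⟩
        have h2 := hb x
        have e : (⟨a * b * x.1 * (a * b)⁻¹, x.2.trans (isConj_iff.mpr ⟨a * b, rfl⟩)⟩ : R)
            = ⟨a * (b * x.1 * b⁻¹) * a⁻¹,
              (x.2.trans (isConj_iff.mpr ⟨b, rfl⟩)).trans (isConj_iff.mpr ⟨a, rfl⟩)⟩ := by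
          apply Subtype.ext
          simp only []
          group
        rw [e, h1, h2]
      inv_mem' := by
        intro a ha x
        have h1 := ha ⟨a⁻¹ * x.1 * a, x.2.trans (isConj_iff.mpr ⟨a⁻¹, by group⟩)⟩
        have e : (⟨a * (a⁻¹ * x.1 * a) * a⁻¹,
              (x.2.trans (isConj_iff.mpr ⟨a⁻¹, by group⟩)).trans (isConj_iff.mpr ⟨a, rfl⟩)⟩ : R)
            = x := by
          apply Subtype.ext
          simp only []
          group
        rw [e] at h1
        have e2 : (⟨a⁻¹ * x.1 * a⁻¹⁻¹, x.2.trans (isConj_iff.mpr ⟨a⁻¹, rfl⟩)⟩ : R)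
            = ⟨a⁻¹ * x.1 * a, x.2.trans (isConj_iff.mpr ⟨a⁻¹, by group⟩)⟩ := by
          apply Subtype.ext
          simp only []
          group
        rw [e2, ← h1] }
  have hXT : {h | IsConj g₀ h} ⊆ T := by
    intro c hc x
    let y : R := ⟨c, hc⟩
    have e : (⟨c * x.1 * c⁻¹, x.2.trans (isConj_iff.mpr ⟨c, rfl⟩)⟩ : R) = y ◃ x := by
      apply Subtype.ext
      rfl
    rw [e, hπact]
  have hT : ∀ c : G, c ∈ T := by
    have : Subgroup.closure {h | IsConj g₀ h} ≤ T := (Subgroup.closure_le T).mpr hXT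
    rw [hgen] at this
    exact fun c => this (Subgroup.mem_top c)
  -- base point
  set x₀ : R := ⟨g₀, IsConj.refl g₀⟩ with hx₀
  have hconst : ∀ x : R, π (g x) = π (g x₀) := by
    intro x
    obtain ⟨c, hc⟩ := isConj_iff.mp x.2
    have := hT c x₀
    have e : (⟨c * x₀.1 * c⁻¹, x₀.2.trans (isConj_iff.mpr ⟨c, rfl⟩)⟩ : R) = x := by
      apply Subtype.ext
      exact hc
    rw [e] at this
    exact this
  -- abelianization generated by π (g x₀)
  have hgenA : ∀ w : Q, ∃ n : ℤ, (π (g x₀)) ^ n = π w := by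
    intro w
    have hsur : Subgroup.closure (π '' Set.range g) = ⊤ := by
      rw [← MonoidHom.map_closure, hg, envelGroup_closure_range, ← MonoidHom.range_eq_map,
        MonoidHom.range_eq_top]
      exact fun b => QuotientGroup.induction_on b fun z => ⟨z, rfl⟩
    have hsub : π '' Set.range g ⊆ (Subgroup.closure {π (g x₀)} : Subgroup (Abelianization Q)) := by
      rintro _ ⟨_, ⟨x, rfl⟩, rfl⟩
      rw [hconst x]
      exact Subgroup.subset_closure rfl
    have : (Subgroup.closure (π '' Set.range g)) ≤ Subgroup.closure {π (g x₀)} :=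
      (Subgroup.closure_le _).mpr hsub
    rw [hsur] at this
    exact Subgroup.mem_closure_singleton.mp (this (Subgroup.mem_top (π w)))
  apply le_antisymm
  · exact Abelianization.commutator_subset_ker d
  · intro w hw
    obtain ⟨n, hn⟩ := hgenA w
    have hDw : Abelianization.lift d (π w) = d w := Abelianization.lift_apply_of d w
    have hdw : d w = 1 := hw
    have : Abelianization.lift d ((π (g x₀)) ^ n) = Multiplicative.ofAdd n := by
      rw [map_zpow, Abelianization.lift_apply_of, hd, ← ofAdd_zsmul, smul_eq_mul, mul_one]
    rw [hn, hDw, hdw] at this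
    have hn0 : n = 0 := by
      have := this.symm
      simpa using this
    rw [hn0, zpow_zero] at hn
    have : π w = 1 := hn.symm
    exact (QuotientGroup.eq_one_iff w).mp this
end

section
/- Let G be a group generated by a conjugacy class X. The adjoint action of Ass(X) on itself descends along π : Ass(X) → G to a well-defined action of G on Ass(X): that is, for g, h ∈ Ass(X), the conjugate g h g⁻¹ depends only on π(g) and h. -/
open Quandles

section Aux

variable {G : Type} [Group G] {g₀ : G}

/-- Conjugation action of `G` on the conjugacy class. -/
def conjA (a : G) (y : ConjClassOf G g₀) : ConjClassOf G g₀ :=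
  ⟨a * y.1 * a⁻¹, y.2.trans (isConj_iff.mpr ⟨a, rfl⟩)⟩

lemma conjA_mul (a b : G) (y : ConjClassOf G g₀) :
    conjA (a * b) y = conjA a (conjA b y) := by
  apply Subtype.ext
  show a * b * y.1 * (a * b)⁻¹ = a * (b * y.1 * b⁻¹) * a⁻¹
  group

lemma conjA_one (y : ConjClassOf G g₀) : conjA (1 : G) y = y := by
  apply Subtype.ext
  show 1 * y.1 * 1⁻¹ = y.1
  group

lemma conjA_inv_cancel (a : G) (y : ConjClassOf G g₀) :
    conjA a (conjA a⁻¹ y) = y := by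
  apply Subtype.ext
  show a * (a⁻¹ * y.1 * a⁻¹⁻¹) * a⁻¹ = y.1
  group

open Rack in
/-- Abbreviation for the quotient map. -/
def q (a : Rack.PreEnvelGroup (ConjClassOf G g₀)) : Rack.EnvelGroup (ConjClassOf G g₀) := ⟦a⟧

open Rack in
lemma q_unit : (q (G := G) (g₀ := g₀) PreEnvelGroup.unit) = 1 := rfl

open Rack in
lemma q_incl (x : ConjClassOf G g₀) :
    q (PreEnvelGroup.incl x) = Rack.toEnvelGroup (ConjClassOf G g₀) x := rfl

open Rack in
lemma q_mul (a b : Rack.PreEnvelGroup (ConjClassOf G g₀)) :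
    q (PreEnvelGroup.mul a b) = q a * q b := rfl

open Rack in
lemma q_inv (a : Rack.PreEnvelGroup (ConjClassOf G g₀)) :
    q (PreEnvelGroup.inv a) = (q a)⁻¹ := rfl

open Rack in
lemma key_conj (π : Rack.EnvelGroup (ConjClassOf G g₀) →* G)
    (hπ : ∀ x : ConjClassOf G g₀, π (Rack.toEnvelGroup (ConjClassOf G g₀) x) = x.1) :
    ∀ (g : Rack.EnvelGroup (ConjClassOf G g₀)) (y : ConjClassOf G g₀),
      g * Rack.toEnvelGroup (ConjClassOf G g₀) y * g⁻¹ =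
        Rack.toEnvelGroup (ConjClassOf G g₀) (conjA (π g) y) := by
  have main : ∀ (a : Rack.PreEnvelGroup (ConjClassOf G g₀)) (y : ConjClassOf G g₀),
      q a * Rack.toEnvelGroup (ConjClassOf G g₀) y * (q a)⁻¹ =
        Rack.toEnvelGroup (ConjClassOf G g₀) (conjA (π (q a)) y) := by
    intro a
    induction a with
    | unit =>
      intro y
      rw [q_unit, one_mul, inv_one, mul_one, map_one, conjA_one]
    | incl x =>
      intro y
      rw [q_incl, hπ]
      have h2 : conjA x.1 y = x ◃ y := rfl
      rw [h2]
      exact ((Rack.toEnvelGroup (ConjClassOf G g₀)).map_act' (x := x) (y := y)).symm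
    | mul a b ha hb =>
      intro y
      rw [q_mul, map_mul, conjA_mul, ← ha, ← hb]
      group
    | inv a ha =>
      intro y
      rw [q_inv, map_inv]
      have h2 := ha (conjA (π (q a))⁻¹ y)
      rw [conjA_inv_cancel] at h2
      rw [← h2]
      group
  intro g
  induction g using Quotient.inductionOn with
  | h a => exact main a

open Rack in
lemma ker_central (π : Rack.EnvelGroup (ConjClassOf G g₀) →* G)
    (hπ : ∀ x : ConjClassOf G g₀, π (Rack.toEnvelGroup (ConjClassOf G g₀) x) = x.1)
    (k : Rack.EnvelGroup (ConjClassOf G g₀)) (hk : π k = 1) :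
    ∀ h : Rack.EnvelGroup (ConjClassOf G g₀), k * h = h * k := by
  have main : ∀ a : Rack.PreEnvelGroup (ConjClassOf G g₀), k * q a = q a * k := by
    intro a
    induction a with
    | unit =>
      rw [q_unit, mul_one, one_mul]
    | incl x =>
      rw [q_incl]
      have := key_conj π hπ k x
      rw [hk, conjA_one] at this
      calc k * Rack.toEnvelGroup (ConjClassOf G g₀) x
          = (k * Rack.toEnvelGroup (ConjClassOf G g₀) x * k⁻¹) * k := by group
        _ = Rack.toEnvelGroup (ConjClassOf G g₀) x * k := by rw [this]
    | mul a b ha hb =>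
      rw [q_mul, ← mul_assoc, ha, mul_assoc, hb, mul_assoc]
    | inv a ha =>
      rw [q_inv]
      exact (Commute.inv_right (ha : Commute k (q a))).eq
  intro h
  induction h using Quotient.inductionOn with
  | h a => exact main a

end Aux

/-- Let `G` be a group generated by a conjugacy class `X`. The adjoint action of `Ass(X)` on
itself descends along `π : Ass(X) → G` to a well-defined action of `G` on `Ass(X)`:
for `g, g', h ∈ Ass(X)`, if `π(g) = π(g')` then `g h g⁻¹ = g' h g'⁻¹`. -/
theorem envelGroup_adjoint_action_descends (G : Type) [Group G] (g₀ : G)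
    (hgen : Subgroup.closure {h | IsConj g₀ h} = ⊤)
    (π : Rack.EnvelGroup (ConjClassOf G g₀) →* G)
    (hπ : ∀ x : ConjClassOf G g₀, π (Rack.toEnvelGroup (ConjClassOf G g₀) x) = x.1) :
    ∀ g g' h : Rack.EnvelGroup (ConjClassOf G g₀),
      π g = π g' → g * h * g⁻¹ = g' * h * g'⁻¹ := by
  intro g g' h hgg'
  set k := g'⁻¹ * g with hkdef
  have hk : π k = 1 := by
    rw [hkdef, map_mul, map_inv, hgg', inv_mul_cancel]
  have hcomm := ker_central π hπ k hk h
  have hg : g = g' * k := by rw [hkdef]; group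
  rw [hg]
  calc g' * k * h * (g' * k)⁻¹ = g' * (k * h * k⁻¹) * g'⁻¹ := by group
    _ = g' * (h * k * k⁻¹) * g'⁻¹ := by rw [hcomm]
    _ = g' * h * g'⁻¹ := by group
end

section
/- Let G be a perfect group generated by a conjugacy class X, let D_X = [Ass(X), Ass(X)], let x₀ ∈ X, and let g₀ ∈ D_X with π(g₀) = x₀. Then the map Ass(X) → D_X × ℤ, g ↦ (g · g_{x₀}^{-d(g)} · g₀^{d(g)}, d(g)), is a group isomorphism. In particular, Ass(X) ≅ D_X × ℤ. -/
open Quandles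

section AuxEnvel

theorem envel_mem_closure (R : Type*) [Rack R] (g : Rack.EnvelGroup R) :
    g ∈ Subgroup.closure (Set.range (fun x : R => (Rack.toEnvelGroup R x : Rack.EnvelGroup R))) := by
  induction g using Quotient.ind with
  | _ w =>
    induction w with
    | unit => exact Subgroup.one_mem _
    | incl x => exact Subgroup.subset_closure ⟨x, rfl⟩
    | mul a b ha hb => exact Subgroup.mul_mem _ ha hb
    | inv a ha => exact Subgroup.inv_mem _ ha

theorem envel_induction (R : Type*) [Rack R] {p : Rack.EnvelGroup R → Prop}
    (mem : ∀ x : R, p (Rack.toEnvelGroup R x)) (one : p 1)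
    (mul : ∀ a b, p a → p b → p (a * b)) (inv : ∀ a, p a → p a⁻¹) (g : Rack.EnvelGroup R) :
    p g :=
  Subgroup.closure_induction (p := fun g _ => p g)
    (fun _ hx => by obtain ⟨y, rfl⟩ := hx; exact mem y) one
    (fun a b _ _ ha hb => mul a b ha hb) (fun a _ ha => inv a ha) (envel_mem_closure R g)

/-- Conjugation action of the ambient group on a conjugacy class. -/
def conjAct' {G : Type*} [Group G] {c : G} (q : G) (y : ConjClassOf G c) : ConjClassOf G c :=
  ⟨q * y.1 * q⁻¹, y.2.trans (isConj_iff.mpr ⟨q, rfl⟩)⟩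

theorem conjAct'_val {G : Type*} [Group G] {c : G} (q : G) (y : ConjClassOf G c) :
    (conjAct' q y).1 = q * y.1 * q⁻¹ := rfl

theorem conjAct'_one {G : Type*} [Group G] {c : G} (y : ConjClassOf G c) :
    conjAct' 1 y = y := Subtype.ext (by simp [conjAct'_val])

theorem conjAct'_mul {G : Type*} [Group G] {c : G} (q r : G) (y : ConjClassOf G c) :
    conjAct' q (conjAct' r y) = conjAct' (q * r) y :=
  Subtype.ext (by simp [conjAct'_val]; group)

end AuxEnvel

/-- Let `G` be a perfect group generated by a conjugacy class `X`, `D_X = [Ass(X), Ass(X)]`,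
`x₀ ∈ X`, and `g₀ ∈ D_X` with `π(g₀) = x₀`. Then the map
`g ↦ (g · g_{x₀}^{-d(g)} · g₀^{d(g)}, d(g))` is a group isomorphism from `Ass(X)` onto
`D_X × ℤ`: its first component lands in `D_X`, it is multiplicative, injective, and hits exactly
the pairs with first component in `D_X`. In particular `Ass(X) ≅ D_X × ℤ`. -/
theorem envelGroup_iso_commutator_prod_int (G : Type) [Group G] (c : G)
    (hperf : commutator G = ⊤)
    (hgen : Subgroup.closure {h | IsConj c h} = ⊤)
    (π : Rack.EnvelGroup (ConjClassOf G c) →* G)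
    (hπ : ∀ x : ConjClassOf G c, π (Rack.toEnvelGroup (ConjClassOf G c) x) = x.1)
    (d : Rack.EnvelGroup (ConjClassOf G c) →* Multiplicative ℤ)
    (hd : ∀ x : ConjClassOf G c,
      d (Rack.toEnvelGroup (ConjClassOf G c) x) = Multiplicative.ofAdd 1)
    (x₀ : ConjClassOf G c) (e₀ : Rack.EnvelGroup (ConjClassOf G c))
    (he₀ : e₀ ∈ commutator (Rack.EnvelGroup (ConjClassOf G c)))
    (hπe₀ : π e₀ = x₀.1)
    (f : Rack.EnvelGroup (ConjClassOf G c) →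
      Rack.EnvelGroup (ConjClassOf G c) × Multiplicative ℤ)
    (hf : ∀ g, f g =
      (g * (Rack.toEnvelGroup (ConjClassOf G c) x₀ : Rack.EnvelGroup (ConjClassOf G c)) ^
          (-(Multiplicative.toAdd (d g))) * e₀ ^ (Multiplicative.toAdd (d g)), d g)) :
    (∀ g, (f g).1 ∈ commutator (Rack.EnvelGroup (ConjClassOf G c))) ∧
      (∀ g h, f (g * h) = f g * f h) ∧
      Function.Injective f ∧
      (∀ (a : Rack.EnvelGroup (ConjClassOf G c)) (m : Multiplicative ℤ),
        a ∈ commutator (Rack.EnvelGroup (ConjClassOf G c)) → ∃ g, f g = (a, m)) ∧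
      Nonempty (Rack.EnvelGroup (ConjClassOf G c) ≃*
        (commutator (Rack.EnvelGroup (ConjClassOf G c))) × Multiplicative ℤ) := by
  
  have hπt : π (Rack.toEnvelGroup (ConjClassOf G c) x₀) = x₀.1 := hπ x₀
  have hdt : d (Rack.toEnvelGroup (ConjClassOf G c) x₀) = Multiplicative.ofAdd (1 : ℤ) := hd x₀
  -- conjugation of a generator by any element of the enveloping group
  have hconj : ∀ g : Rack.EnvelGroup (ConjClassOf G c), ∀ y : ConjClassOf G c,
      g * Rack.toEnvelGroup (ConjClassOf G c) y * g⁻¹ =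
        Rack.toEnvelGroup (ConjClassOf G c) (conjAct' (π g) y) := by
    intro g
    induction g using envel_induction with
    | mem x =>
      intro y
      have h1 : Rack.toEnvelGroup (ConjClassOf G c) x * Rack.toEnvelGroup (ConjClassOf G c) y *
          (Rack.toEnvelGroup (ConjClassOf G c) x)⁻¹ =
          Rack.toEnvelGroup (ConjClassOf G c) (x ◃ y) :=
        ((Rack.toEnvelGroup (ConjClassOf G c)).map_act (x := x) (y := y)).symm
      rw [h1]
      refine congrArg _ (Subtype.ext ?_)
      show x.1 * y.1 * x.1⁻¹ = _
      rw [conjAct'_val, hπ]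
    | one =>
      intro y
      rw [map_one, conjAct'_one]
      simp
    | mul a b ha hb =>
      intro y
      have h3 : (a * b) * Rack.toEnvelGroup (ConjClassOf G c) y * (a * b)⁻¹ =
          a * (b * Rack.toEnvelGroup (ConjClassOf G c) y * b⁻¹) * a⁻¹ := by group
      rw [h3, hb y, ha (conjAct' (π b) y), conjAct'_mul, ← map_mul]
    | inv a ha =>
      intro y
      have h4 := ha (conjAct' (π a⁻¹) y)
      have h5 : conjAct' (π a) (conjAct' (π a⁻¹) y) = y := by
        rw [conjAct'_mul, ← map_mul]
        simp [conjAct'_one]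
      rw [h5] at h4
      rw [← h4]
      group
  -- surjectivity of π
  have hsurj : ∀ q : G, ∃ g : Rack.EnvelGroup (ConjClassOf G c), π g = q := by
    intro q
    have hle : Subgroup.closure {h | IsConj c h} ≤ π.range :=
      (Subgroup.closure_le _).mpr
        (fun h hh => ⟨Rack.toEnvelGroup (ConjClassOf G c) ⟨h, hh⟩, hπ _⟩)
    exact hle (hgen ▸ Subgroup.mem_top q)
  -- the central element z
  set z : Rack.EnvelGroup (ConjClassOf G c) := e₀ * (Rack.toEnvelGroup (ConjClassOf G c) x₀)⁻¹ with hzdef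
  have hπz : π z = 1 := by
    rw [hzdef, map_mul, map_inv, hπe₀, hπt]
    group
  have hz : ∀ w : Rack.EnvelGroup (ConjClassOf G c), Commute z w := by
    intro w
    induction w using envel_induction with
    | mem y =>
      have hc := hconj z y
      rw [hπz, conjAct'_one] at hc
      have : z * Rack.toEnvelGroup (ConjClassOf G c) y =
          Rack.toEnvelGroup (ConjClassOf G c) y * z := by
        calc z * Rack.toEnvelGroup (ConjClassOf G c) y
            = (z * Rack.toEnvelGroup (ConjClassOf G c) y * z⁻¹) * z := by group
          _ = Rack.toEnvelGroup (ConjClassOf G c) y * z := by rw [hc]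
      exact this
    | one => exact Commute.one_right z
    | mul a b ha hb => exact ha.mul_right hb
    | inv a ha => exact ha.inv_right
  have hzt : e₀ = z * (Rack.toEnvelGroup (ConjClassOf G c) x₀) := by rw [hzdef]; group
  have hkey : ∀ n : ℤ, (Rack.toEnvelGroup (ConjClassOf G c) x₀) ^ (-n) * e₀ ^ n = z ^ n := by
    intro n
    rw [hzt, (hz (Rack.toEnvelGroup (ConjClassOf G c) x₀)).mul_zpow]
    calc (Rack.toEnvelGroup (ConjClassOf G c) x₀) ^ (-n) * (z ^ n * (Rack.toEnvelGroup (ConjClassOf G c) x₀) ^ n)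
        = ((Rack.toEnvelGroup (ConjClassOf G c) x₀) ^ (-n) * z ^ n) * (Rack.toEnvelGroup (ConjClassOf G c) x₀) ^ n := by rw [mul_assoc]
      _ = (z ^ n * (Rack.toEnvelGroup (ConjClassOf G c) x₀) ^ (-n)) * (Rack.toEnvelGroup (ConjClassOf G c) x₀) ^ n := by
          rw [((hz ((Rack.toEnvelGroup (ConjClassOf G c) x₀) ^ (-n))).symm.zpow_right n).eq]
      _ = z ^ n := by rw [mul_assoc, ← zpow_add]; simp
  have hf1 : ∀ g, (f g).1 = g * z ^ (Multiplicative.toAdd (d g)) := by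
    intro g
    rw [hf]
    show g * (Rack.toEnvelGroup (ConjClassOf G c) x₀) ^ (-(Multiplicative.toAdd (d g))) * e₀ ^ (Multiplicative.toAdd (d g)) = _
    rw [mul_assoc, hkey]
  have hf2 : ∀ g, (f g).2 = d g := by intro g; rw [hf]
  -- abelianization computations
  have hofe₀ : Abelianization.of e₀ = 1 :=
    Abelianization.commutator_subset_ker Abelianization.of he₀
  have hofz : Abelianization.of z = (Abelianization.of (Rack.toEnvelGroup (ConjClassOf G c) x₀))⁻¹ := by
    rw [hzdef, map_mul, map_inv, hofe₀, one_mul]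
  have habel : ∀ g, Abelianization.of g =
      (Abelianization.of (Rack.toEnvelGroup (ConjClassOf G c) x₀)) ^ (Multiplicative.toAdd (d g)) := by
    intro g
    induction g using envel_induction with
    | mem y =>
      obtain ⟨q, hq⟩ := isConj_iff.mp (x₀.2.symm.trans y.2)
      obtain ⟨g, hg⟩ := hsurj q
      have h8 := hconj g x₀
      have h9 : conjAct' (π g) x₀ = y := Subtype.ext (by rw [conjAct'_val, hg]; exact hq)
      rw [h9] at h8
      rw [hd, toAdd_ofAdd, zpow_one, ← h8, map_mul, map_mul, map_inv,
        mul_comm (Abelianization.of g) (Abelianization.of (Rack.toEnvelGroup (ConjClassOf G c) x₀)), mul_inv_cancel_right]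
    | one => simp
    | mul a b ha hb => rw [map_mul, ha, hb, map_mul, toAdd_mul, zpow_add]
    | inv a ha => rw [map_inv, ha, map_inv, toAdd_inv, zpow_neg]
  -- the first component of f lies in the commutator subgroup
  have hmem : ∀ g, (f g).1 ∈ commutator (Rack.EnvelGroup (ConjClassOf G c)) := by
    intro g
    have h10 : Abelianization.of ((f g).1) = 1 := by
      rw [hf1, map_mul, map_zpow, hofz, habel g, inv_zpow, ← zpow_neg, ← zpow_add]
      simp
    exact (QuotientGroup.eq_one_iff _).mp h10
  -- d kills the commutator subgroup
  have hdcomm : ∀ g, g ∈ commutator (Rack.EnvelGroup (ConjClassOf G c)) → d g = 1 := fun g hg =>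
    MonoidHom.mem_ker.mp (Abelianization.commutator_subset_ker d hg)
  -- multiplicativity
  have hmul : ∀ g h, f (g * h) = f g * f h := by
    intro g h
    have h11 : (f (g * h)).1 = (f g * f h).1 := by
      rw [Prod.fst_mul, hf1, hf1, hf1, map_mul, toAdd_mul]
      have hcomm : z ^ (Multiplicative.toAdd (d g)) * h = h * z ^ (Multiplicative.toAdd (d g)) :=
        ((hz h).zpow_left _).eq
      calc g * h * z ^ (Multiplicative.toAdd (d g) + Multiplicative.toAdd (d h))
          = g * (h * z ^ (Multiplicative.toAdd (d g))) * z ^ (Multiplicative.toAdd (d h)) := by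
            rw [zpow_add]; group
        _ = g * (z ^ (Multiplicative.toAdd (d g)) * h) * z ^ (Multiplicative.toAdd (d h)) := by
            rw [hcomm]
        _ = g * z ^ (Multiplicative.toAdd (d g)) * (h * z ^ (Multiplicative.toAdd (d h))) := by
            group
    have h12 : (f (g * h)).2 = (f g * f h).2 := by
      rw [Prod.snd_mul, hf2, hf2, hf2, map_mul]
    exact Prod.ext h11 h12
  -- injectivity
  have hinj : Function.Injective f := by
    intro g h hgh
    have hd' : d g = d h := by rw [← hf2 g, ← hf2 h, hgh]
    have h13 : g * z ^ (Multiplicative.toAdd (d g)) = h * z ^ (Multiplicative.toAdd (d g)) := by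
      rw [← hf1 g, hgh, hf1 h, hd']
    exact mul_right_cancel h13
  -- surjectivity onto the commutator × ℤ
  have hdz : d z = Multiplicative.ofAdd (-1 : ℤ) := by
    rw [hzdef, map_mul, map_inv, hdcomm e₀ he₀, one_mul, hdt]
    rfl
  have hsurj2 : ∀ (a : Rack.EnvelGroup (ConjClassOf G c)) (m : Multiplicative ℤ),
      a ∈ commutator (Rack.EnvelGroup (ConjClassOf G c)) → ∃ g, f g = (a, m) := by
    intro a m ha
    refine ⟨a * z ^ (-(Multiplicative.toAdd m)), ?_⟩
    have hda : d (a * z ^ (-(Multiplicative.toAdd m))) = m := by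
      rw [map_mul, hdcomm a ha, one_mul, map_zpow, hdz]
      apply Multiplicative.toAdd.injective
      rw [toAdd_zpow]
      simp
    have hfst : (f (a * z ^ (-(Multiplicative.toAdd m)))).1 = a := by
      rw [hf1, hda, mul_assoc, ← zpow_add]
      simp
    have hsnd : (f (a * z ^ (-(Multiplicative.toAdd m)))).2 = m := by rw [hf2, hda]
    exact Prod.ext hfst hsnd
  refine ⟨hmem, hmul, hinj, hsurj2, ?_⟩
  -- assemble the isomorphism
  let F : Rack.EnvelGroup (ConjClassOf G c) →*
      (commutator (Rack.EnvelGroup (ConjClassOf G c))) × Multiplicative ℤ :=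
    { toFun := fun g => (⟨(f g).1, hmem g⟩, (f g).2)
      map_one' := by
        have h1a : (f 1).1 = 1 := by rw [hf1]; simp
        have h1b : (f 1).2 = 1 := by rw [hf2]; simp
        exact Prod.ext (Subtype.ext h1a) h1b
      map_mul' := fun g h => by
        have h16 := hmul g h
        have e1 : (f (g * h)).1 = (f g).1 * (f h).1 := by rw [h16]; rfl
        have e2 : (f (g * h)).2 = (f g).2 * (f h).2 := by rw [h16]; rfl
        exact Prod.ext (Subtype.ext e1) e2 }
  have hFinj : Function.Injective F := by
    intro g h hgh
    apply hinj
    have h1 : (f g).1 = (f h).1 :=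
      congrArg (fun p : (commutator (Rack.EnvelGroup (ConjClassOf G c))) × Multiplicative ℤ =>
        (p.1 : Rack.EnvelGroup (ConjClassOf G c))) hgh
    have h2 : (f g).2 = (f h).2 :=
      congrArg (fun p : (commutator (Rack.EnvelGroup (ConjClassOf G c))) × Multiplicative ℤ =>
        p.2) hgh
    exact Prod.ext h1 h2
  have hFsurj : Function.Surjective F := by
    rintro ⟨⟨a, ha⟩, m⟩
    obtain ⟨g, hg⟩ := hsurj2 a m ha
    refine ⟨g, ?_⟩
    refine Prod.ext (Subtype.ext ?_) ?_
    · show (f g).1 = a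
      rw [hg]
    · show (f g).2 = m
      rw [hg]
  exact ⟨MulEquiv.ofBijective F ⟨hFinj, hFsurj⟩⟩
end

section
/- In the alternating group A₅, the conjugacy class X₁ of (1 2 3 4 5) satisfies X₁^[2] = X₂, where X₂ is the conjugacy class of (1 2 3 5 4) and X^[2] = {x² : x ∈ X}; moreover X₁ ≠ X₂ but X₁ and X₂ are isomorphic as conjugation racks (via conjugation by a transposition in S₅). -/
set_option maxRecDepth 10000

private lemma aux_subset (τ u v : Equiv.Perm (Fin 5)) (huv : τ * u * τ⁻¹ = v)
    (a b : alternatingGroup (Fin 5)) (ha : (a : Equiv.Perm (Fin 5)) = u)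
    (hb : (b : Equiv.Perm (Fin 5)) = v) :
    (fun x => τ * x * τ⁻¹) '' (Subtype.val '' {x | IsConj a x}) ⊆
      Subtype.val '' {x | IsConj b x} := by
  rintro _ ⟨_, ⟨g, hg, rfl⟩, rfl⟩
  obtain ⟨c, hc⟩ := isConj_iff.mp hg
  have hc' : (c : Equiv.Perm (Fin 5)) * u * (c : Equiv.Perm (Fin 5))⁻¹ =
      (g : Equiv.Perm (Fin 5)) := by
    have := congrArg (Subtype.val) hc
    simpa [ha] using this
  have hmem : ∀ w : Equiv.Perm (Fin 5), w ∈ alternatingGroup (Fin 5) →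
      τ * w * τ⁻¹ ∈ alternatingGroup (Fin 5) := by
    intro w hw
    rw [Equiv.Perm.mem_alternatingGroup] at hw ⊢
    simp [map_mul, hw, mul_comm]
  refine ⟨⟨τ * (g : Equiv.Perm (Fin 5)) * τ⁻¹, hmem _ g.2⟩,
    isConj_iff.mpr ⟨⟨τ * (c : Equiv.Perm (Fin 5)) * τ⁻¹, hmem _ c.2⟩, ?_⟩, rfl⟩
  apply Subtype.ext
  show (τ * (c : Equiv.Perm (Fin 5)) * τ⁻¹) * (b : Equiv.Perm (Fin 5)) *
      (τ * (c : Equiv.Perm (Fin 5)) * τ⁻¹)⁻¹ = τ * (g : Equiv.Perm (Fin 5)) * τ⁻¹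
  rw [hb, ← huv, ← hc']
  group

/-- In `A₅`, with `X₁` the conjugacy class of the 5-cycle `σ₁ = (0 1 2 3 4)` and `X₂` the class of
`σ₂ = (0 1 2 4 3)`: the set of squares of `X₁` equals `X₂`, the classes `X₁` and `X₂` are
distinct, and they are isomorphic as conjugation racks via conjugation by a transposition
of `S₅`. -/
theorem alternating_five_cycle_class_square (σ₁ σ₂ : Equiv.Perm (Fin 5))
    (h₁ : σ₁ = ([0, 1, 2, 3, 4] : List (Fin 5)).formPerm)
    (h₂ : σ₂ = ([0, 1, 2, 4, 3] : List (Fin 5)).formPerm)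
    (a b : alternatingGroup (Fin 5)) (ha : (a : Equiv.Perm (Fin 5)) = σ₁)
    (hb : (b : Equiv.Perm (Fin 5)) = σ₂)
    (X₁ X₂ : Set (alternatingGroup (Fin 5)))
    (hX₁ : X₁ = {x | IsConj a x}) (hX₂ : X₂ = {x | IsConj b x}) :
    (fun x => x ^ 2) '' X₁ = X₂ ∧
      X₁ ≠ X₂ ∧
      ∃ τ : Equiv.Perm (Fin 5), τ.IsSwap ∧
        (fun x => τ * x * τ⁻¹) '' (Subtype.val '' X₁) = Subtype.val '' X₂ := by
  subst h₁ h₂ hX₁ hX₂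
  have key : IsConj (a ^ 2) b := by
    refine isConj_iff.mpr ⟨⟨([1, 4, 2] : List (Fin 5)).formPerm, ?_⟩, ?_⟩
    · rw [Equiv.Perm.mem_alternatingGroup]; decide
    · apply Subtype.ext
      show ([1, 4, 2] : List (Fin 5)).formPerm * ((a : Equiv.Perm (Fin 5)) ^ 2) *
        (([1, 4, 2] : List (Fin 5)).formPerm)⁻¹ = (b : Equiv.Perm (Fin 5))
      rw [ha, hb]
      decide
  refine ⟨?_, ?_, ?_⟩
  · ext x
    simp only [Set.mem_image, Set.mem_setOf_eq]
    constructor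
    · rintro ⟨y, hy, rfl⟩
      obtain ⟨c, hc⟩ := isConj_iff.mp hy
      refine key.symm.trans (isConj_iff.mpr ⟨c, ?_⟩)
      rw [← hc]; simp [pow_two, mul_assoc]
    · intro hx
      obtain ⟨c, hc⟩ := isConj_iff.mp (key.trans hx)
      refine ⟨c * a * c⁻¹, isConj_iff.mpr ⟨c, rfl⟩, ?_⟩
      rw [← hc]; simp [pow_two, mul_assoc]
  · intro hEq
    have hb2 : IsConj a b := by
      have : b ∈ {x | IsConj a x} := by rw [hEq]; exact IsConj.refl b
      exact this
    obtain ⟨c, hc⟩ := isConj_iff.mp hb2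
    have hc' : (c : Equiv.Perm (Fin 5)) * ([0,1,2,3,4] : List (Fin 5)).formPerm *
        (c : Equiv.Perm (Fin 5))⁻¹ = ([0,1,2,4,3] : List (Fin 5)).formPerm := by
      have := congrArg (Subtype.val) hc
      simpa [ha, hb] using this
    have hsign : Equiv.Perm.sign (c : Equiv.Perm (Fin 5)) = 1 :=
      Equiv.Perm.mem_alternatingGroup.mp c.2
    have hall : ∀ c : Equiv.Perm (Fin 5), Equiv.Perm.sign c = 1 →
        ¬ (c * ([0,1,2,3,4] : List (Fin 5)).formPerm * c⁻¹ =
          ([0,1,2,4,3] : List (Fin 5)).formPerm) := by decide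
    exact hall _ hsign hc'
  · refine ⟨Equiv.swap 3 4, ⟨3, 4, by decide, rfl⟩, ?_⟩
    set τ := Equiv.swap (3 : Fin 5) 4 with hτ
    have h12 : τ * ([0,1,2,3,4] : List (Fin 5)).formPerm * τ⁻¹ =
        ([0,1,2,4,3] : List (Fin 5)).formPerm := by rw [hτ]; decide
    have h21 : τ * ([0,1,2,4,3] : List (Fin 5)).formPerm * τ⁻¹ =
        ([0,1,2,3,4] : List (Fin 5)).formPerm := by rw [hτ]; decide
    have hττ : τ * τ = 1 := Equiv.swap_mul_self 3 4
    have hinv : τ⁻¹ = τ := Equiv.swap_inv 3 4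
    apply Set.Subset.antisymm
    · exact aux_subset τ _ _ h12 a b ha hb
    · have h2 : (fun x => τ * x * τ⁻¹) '' (Subtype.val '' {x | IsConj b x}) ⊆
          Subtype.val '' {x | IsConj a x} := aux_subset τ _ _ h21 b a hb ha
      intro x hx
      have hxid : τ * (τ * x * τ⁻¹) * τ⁻¹ = x := by
        rw [hinv]
        simp only [← mul_assoc]
        rw [hττ, one_mul, mul_assoc, hττ, mul_one]
      have : x = (fun y => τ * y * τ⁻¹) (τ * x * τ⁻¹) := hxid.symm
      rw [this]
      exact Set.mem_image_of_mem _ (h2 ⟨x, hx, rfl⟩)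
end

section
/- A conjugacy class of PSL(2,q) is abelian as a rack (i.e., x▷y = y for all x,y in the class) if and only if q ∈ {2,3} and the class is non-split semisimple; explicitly, these are the class of 3-cycles in PSL(2,2) ≅ S₃ and the class of involutions in PSL(2,3) ≅ A₄. -/
open Matrix


open Matrix

section Instances
variable (R : Type) [CommRing R] [Fintype R] [DecidableEq R]

instance instSLDecEq : DecidableEq (Matrix.SpecialLinearGroup (Fin 2) R) :=
  inferInstanceAs (DecidableEq {A : Matrix (Fin 2) (Fin 2) R // A.det = 1})

instance instSLCenterDec :
    DecidablePred (· ∈ Subgroup.center (Matrix.SpecialLinearGroup (Fin 2) R)) := fun _ =>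
  decidable_of_iff _ (Subgroup.mem_center_iff).symm

def dRel : DecidableRel
    (QuotientGroup.leftRel (Subgroup.center (Matrix.SpecialLinearGroup (Fin 2) R))).r :=
  fun _ _ => decidable_of_iff _ (QuotientGroup.leftRel_apply).symm

instance instPSLDecEq : DecidableEq (Matrix.ProjectiveSpecialLinearGroup (Fin 2) R) :=
  @Quotient.decidableEq _ _ (dRel R)

instance instPSLFintype : Fintype (Matrix.ProjectiveSpecialLinearGroup (Fin 2) R) :=
  @Quotient.fintype _ _ _ (dRel R)

end Instances

set_option maxHeartbeats 4000000 in
lemma d1_two : ∀ x y : Matrix.ProjectiveSpecialLinearGroup (Fin 2) (ZMod 2),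
    x ^ 3 = 1 → y ^ 3 = 1 → x * y = y * x := by decide

set_option maxHeartbeats 4000000 in
lemma d2_two : ∀ g : Matrix.ProjectiveSpecialLinearGroup (Fin 2) (ZMod 2),
    g ≠ 1 → g ^ 3 ≠ 1 → ∃ x, ¬ (g * (x * g * x⁻¹) = (x * g * x⁻¹) * g) := by decide

set_option maxHeartbeats 8000000 in
lemma d1_three : ∀ x y : Matrix.ProjectiveSpecialLinearGroup (Fin 2) (ZMod 3),
    x ^ 2 = 1 → y ^ 2 = 1 → x * y = y * x := by decide

set_option maxHeartbeats 8000000 in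
lemma d2_three : ∀ g : Matrix.ProjectiveSpecialLinearGroup (Fin 2) (ZMod 3),
    g ≠ 1 → g ^ 2 ≠ 1 → ∃ x, ¬ (g * (x * g * x⁻¹) = (x * g * x⁻¹) * g) := by decide


section Transport

variable {F K : Type} [CommRing F] [CommRing K]

/-- `SL(2,F) ≃* SL(2,K)` from a ring isomorphism. -/
def slCongr (e : F ≃+* K) :
    Matrix.SpecialLinearGroup (Fin 2) F ≃* Matrix.SpecialLinearGroup (Fin 2) K where
  toFun := Matrix.SpecialLinearGroup.map (e : F →+* K)
  invFun := Matrix.SpecialLinearGroup.map (e.symm : K →+* F)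
  left_inv A := Subtype.ext <| by
    ext i j
    show Matrix.map (Matrix.map (A : Matrix (Fin 2) (Fin 2) F) (e : F →+* K))
      (e.symm : K →+* F) i j = (A : Matrix (Fin 2) (Fin 2) F) i j
    simp
  right_inv A := Subtype.ext <| by
    ext i j
    show Matrix.map (Matrix.map (A : Matrix (Fin 2) (Fin 2) K) (e.symm : K →+* F))
      (e : F →+* K) i j = (A : Matrix (Fin 2) (Fin 2) K) i j
    simp
  map_mul' := _root_.map_mul _

lemma center_map_eq {G H : Type*} [Group G] [Group H] (φ : G ≃* H) :
    Subgroup.map (φ : G →* H) (Subgroup.center G) = Subgroup.center H := by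
  ext x
  constructor
  · rintro ⟨g, hg, rfl⟩
    rw [SetLike.mem_coe, Subgroup.mem_center_iff] at hg
    rw [Subgroup.mem_center_iff]
    intro h
    have := hg (φ.symm h)
    calc h * φ g = φ (φ.symm h * g) := by simp
    _ = φ (g * φ.symm h) := by rw [← this]
    _ = φ g * h := by simp
  · intro hx
    refine ⟨φ.symm x, ?_, by simp⟩
    rw [Subgroup.mem_center_iff] at hx
    rw [SetLike.mem_coe, Subgroup.mem_center_iff]
    intro h
    apply φ.injective
    simp only [_root_.map_mul, MulEquiv.apply_symm_apply]
    exact hx (φ h)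

/-- `PSL(2,F) ≃* PSL(2,K)` from a ring isomorphism. -/
def pslCongr (e : F ≃+* K) :
    Matrix.ProjectiveSpecialLinearGroup (Fin 2) F ≃*
      Matrix.ProjectiveSpecialLinearGroup (Fin 2) K :=
  QuotientGroup.congr _ _ (slCongr e) (center_map_eq (slCongr e))

end Transport

section Small

lemma main_small {F B : Type*} [Group F] [Group B] (φ : F ≃* B) (k : ℕ)
    (D1 : ∀ x y : B, x ^ k = 1 → y ^ k = 1 → x * y = y * x)
    (D2 : ∀ g : B, g ≠ 1 → g ^ k ≠ 1 →
      ∃ x, ¬ (g * (x * g * x⁻¹) = (x * g * x⁻¹) * g))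
    (g : F) (hg : g ≠ 1) :
    (∀ x y, IsConj g x → IsConj g y → Commute x y) ↔ g ^ k = 1 := by
  constructor
  · intro H
    by_contra hgk
    have h1 : φ g ≠ 1 := fun h => hg (by simpa using φ.injective (h.trans (_root_.map_one φ).symm))
    have h2 : (φ g) ^ k ≠ 1 := fun h => by
      apply hgk
      apply φ.injective
      rw [_root_.map_pow, h, _root_.map_one]
    obtain ⟨x, hx⟩ := D2 (φ g) h1 h2
    apply hx
    have hc : Commute g (φ.symm x * g * (φ.symm x)⁻¹) :=
      H g (φ.symm x * g * (φ.symm x)⁻¹) (IsConj.refl g) (isConj_iff.mpr ⟨φ.symm x, rfl⟩)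
    have := congrArg φ hc
    simpa [_root_.map_mul, _root_.map_inv] using this
  · intro hgk x y hx hy
    obtain ⟨c, rfl⟩ := isConj_iff.mp hx
    obtain ⟨c', rfl⟩ := isConj_iff.mp hy
    have hxk : (c * g * c⁻¹) ^ k = 1 := by rw [conj_pow, hgk, mul_one, mul_inv_cancel]
    have hyk : (c' * g * c'⁻¹) ^ k = 1 := by rw [conj_pow, hgk, mul_one, mul_inv_cancel]
    have := D1 (φ (c * g * c⁻¹)) (φ (c' * g * c'⁻¹))
      (by rw [← _root_.map_pow, hxk, _root_.map_one]) (by rw [← _root_.map_pow, hyk, _root_.map_one])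
    apply φ.injective
    simpa [_root_.map_mul] using this

end Small


variable {F : Type} [Field F]

local notation "M2" => Matrix (Fin 2) (Fin 2) F
local notation "SL2" => Matrix.SpecialLinearGroup (Fin 2) F

-- center elements are ±1
lemma center_pm0 : True := trivial
lemma center_pm (z : SL2) (hz : z ∈ Subgroup.center SL2) :
    (z : M2) = 1 ∨ (z : M2) = -1 := by
  obtain ⟨r, hr, hzr⟩ := Matrix.SpecialLinearGroup.mem_center_iff.mp hz
  rw [Fintype.card_fin] at hr
  have : (r - 1) * (r + 1) = 0 := by ring_nf; linear_combination hr
  rcases mul_eq_zero.mp this with h | h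
  · left
    rw [← hzr, sub_eq_zero.mp h, _root_.map_one]
  · right
    rw [← hzr, eq_neg_of_add_eq_zero_left h, map_neg, _root_.map_one]

-- existence of a good parameter r
lemma exists_good_r [Fintype F] [DecidableEq F] (h4 : 4 ≤ Fintype.card F) (t : F) :
    ∃ r : F, r ≠ 0 ∧ r ≠ t ∧ (r * (t - r) ≠ 2 ∨ (2 : F) * t ≠ 0) := by
  have hout : ∀ S : Finset F, S.card < Fintype.card F → ∃ r, r ∉ S := by
    intro S hS
    by_contra h'
    push_neg at h'
    have hsub : Finset.univ ⊆ S := fun x _ => h' x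
    have := Finset.card_le_card hsub
    rw [Finset.card_univ] at this
    omega
  by_cases h2 : (2 : F) = 0
  · obtain ⟨r, hr⟩ := hout {0, t} (by
      calc ({0, t} : Finset F).card ≤ 2 := by
            apply le_trans (Finset.card_insert_le _ _); simp
        _ < Fintype.card F := by omega)
    simp only [Finset.mem_insert, Finset.mem_singleton, not_or] at hr
    refine ⟨r, hr.1, hr.2, Or.inl ?_⟩
    rw [h2]
    exact mul_ne_zero hr.1 (sub_ne_zero.mpr (fun h => hr.2 h.symm))
  · by_cases ht : t = 0
    · subst ht
      by_cases hsol : ∃ r₁ : F, r₁ * (0 - r₁) = 2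
      · obtain ⟨r₁, hr₁⟩ := hsol
        obtain ⟨r, hr⟩ := hout {0, r₁, -r₁} (by
          calc ({0, r₁, -r₁} : Finset F).card ≤ 3 := by
                apply le_trans (Finset.card_insert_le _ _)
                have := Finset.card_insert_le r₁ ({-r₁} : Finset F)
                simp at this ⊢
                omega
            _ < Fintype.card F := by omega)
        simp only [Finset.mem_insert, Finset.mem_singleton, not_or] at hr
        refine ⟨r, hr.1, hr.1, Or.inl ?_⟩
        intro habs
        have : (r - r₁) * (r + r₁) = 0 := by linear_combination -habs + hr₁
        rcases mul_eq_zero.mp this with h | h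
        · exact hr.2.1 (sub_eq_zero.mp h)
        · exact hr.2.2 (by linear_combination h)
      · push_neg at hsol
        obtain ⟨r, hr⟩ := hout {0} (by simp; omega)
        simp at hr
        exact ⟨r, hr, hr, Or.inl (hsol r)⟩
    · obtain ⟨r, hr⟩ := hout {0, t} (by
        calc ({0, t} : Finset F).card ≤ 2 := by
              apply le_trans (Finset.card_insert_le _ _); simp
          _ < Fintype.card F := by omega)
      simp only [Finset.mem_insert, Finset.mem_singleton, not_or] at hr
      exact ⟨r, hr.1, hr.2, Or.inr (mul_ne_zero h2 ht)⟩

lemma star_lemma (s : SL2)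
    (H : ∀ x : Matrix.ProjectiveSpecialLinearGroup (Fin 2) F,
      Commute (QuotientGroup.mk s) (x * QuotientGroup.mk s * x⁻¹)) :
    ∀ c y : M2, c.det = 1 → y * c = c * (s : M2) →
      (s : M2) * y = y * (s : M2) ∨ (s : M2) * y = -(y * (s : M2)) := by
  intro c y hc hyc
  set C : SL2 := ⟨c, hc⟩ with hCdef
  have hinv : IsUnit c := by rw [Matrix.isUnit_iff_isUnit_det, hc]; exact isUnit_one
  have e1 : (C * s * C⁻¹) * C = C * s := by group
  have hYc : ((C * s * C⁻¹ : SL2) : M2) * c = c * (s : M2) := by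
    calc ((C * s * C⁻¹ : SL2) : M2) * c = (((C * s * C⁻¹) * C : SL2) : M2) := by
          rw [Matrix.SpecialLinearGroup.coe_mul]; rfl
      _ = ((C * s : SL2) : M2) := by rw [e1]
      _ = c * (s : M2) := by rw [Matrix.SpecialLinearGroup.coe_mul]
  have hy : y = ((C * s * C⁻¹ : SL2) : M2) := by
    obtain ⟨uu, huu⟩ := hinv
    have h4 := hyc.trans hYc.symm
    have h5 : y * c * ((uu⁻¹ : (M2)ˣ) : M2) = ((C * s * C⁻¹ : SL2) : M2) * c *
        ((uu⁻¹ : (M2)ˣ) : M2) := by rw [h4]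
    simpa only [← huu, Units.mul_inv_cancel_right] using h5
  have hcomm : Commute (QuotientGroup.mk s)
      (QuotientGroup.mk (C * s * C⁻¹) :
        Matrix.ProjectiveSpecialLinearGroup (Fin 2) F) := by
    have := H (QuotientGroup.mk C)
    simpa [QuotientGroup.mk_mul, QuotientGroup.mk_inv] using this
  have hz : ((s * (C * s * C⁻¹))⁻¹ * ((C * s * C⁻¹) * s)) ∈
      Subgroup.center SL2 := by
    rw [← QuotientGroup.eq]
    have : (QuotientGroup.mk (s * (C * s * C⁻¹)) :
        Matrix.ProjectiveSpecialLinearGroup (Fin 2) F) =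
        QuotientGroup.mk ((C * s * C⁻¹) * s) := by
      simpa [QuotientGroup.mk_mul] using hcomm.eq
    exact this
  have hzpm := center_pm _ hz
  set Y : SL2 := C * s * C⁻¹
  have hYs : Y * s = (s * Y) * ((s * Y)⁻¹ * (Y * s)) := by group
  have hmat : (Y : M2) * (s : M2) =
      ((s : M2) * (Y : M2)) * (((s * Y)⁻¹ * (Y * s) : SL2) : M2) := by
    calc (Y : M2) * (s : M2) = ((Y * s : SL2) : M2) :=
          (Matrix.SpecialLinearGroup.coe_mul Y s).symm
      _ = (((s * Y) * ((s * Y)⁻¹ * (Y * s)) : SL2) : M2) := by rw [← hYs]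
      _ = ((s : M2) * (Y : M2)) * (((s * Y)⁻¹ * (Y * s) : SL2) : M2) := by
          rw [Matrix.SpecialLinearGroup.coe_mul (s * Y) _,
            Matrix.SpecialLinearGroup.coe_mul s Y]
  rcases hzpm with hpm | hpm
  · left
    rw [hy]
    rw [hpm, mul_one] at hmat
    exact hmat.symm
  · right
    rw [hy]
    rw [hpm] at hmat
    have h2 : (Y : M2) * (s : M2) = -((s : M2) * (Y : M2)) := by
      rw [hmat]; simp
    rw [h2, neg_neg]

lemma companion (s : SL2)
    (hns : ¬ ((s : M2) 0 1 = 0 ∧ (s : M2) 1 0 = 0 ∧ (s : M2) 0 0 = (s : M2) 1 1)) :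
    ∃ P Q : M2, P * Q = 1 ∧ Q * P = 1 ∧
      (s : M2) = P * !![0, -1; 1, (s : M2) 0 0 + (s : M2) 1 1] * Q := by
  obtain ⟨a, b, c, d, hs, hdet⟩ : ∃ a b c d : F,
      (s : M2) = !![a, b; c, d] ∧ a * d - b * c = 1 := by
    refine ⟨(s : M2) 0 0, (s : M2) 0 1, (s : M2) 1 0, (s : M2) 1 1,
      Matrix.eta_fin_two _, ?_⟩
    have h2 := s.2
    rw [Matrix.det_fin_two] at h2
    exact h2
  rw [hs] at hns ⊢
  simp only [Matrix.cons_val', Matrix.cons_val_zero, Matrix.cons_val_one,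
    Matrix.head_cons, Matrix.head_fin_const, Matrix.empty_val',
    Matrix.cons_val_fin_one, Matrix.of_apply] at hns ⊢
  by_cases hc0 : c ≠ 0
  · refine ⟨!![1, a; 0, c], !![1, -a * c⁻¹; 0, c⁻¹], ?_, ?_, ?_⟩ <;>
    · ext i j
      fin_cases i <;> fin_cases j <;>
        simp [Matrix.mul_apply, Fin.sum_univ_succ, Matrix.one_apply] <;> field_simp <;>
        first
        | rfl
        | linear_combination hdet
        | linear_combination (-c) * hdet
        | linear_combination c * hdet
        | linear_combination (-(1 + c)) * hdet
        | ring1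
        | linear_combination (-1 : F) * hdet
  · push_neg at hc0
    subst hc0
    by_cases hb0 : b ≠ 0
    · refine ⟨!![0, b; 1, d], !![-d * b⁻¹, 1; b⁻¹, 0], ?_, ?_, ?_⟩ <;>
      · ext i j
        fin_cases i <;> fin_cases j <;>
          simp [Matrix.mul_apply, Fin.sum_univ_succ, Matrix.one_apply] <;> field_simp <;>
          first
          | rfl
          | linear_combination hdet
          | linear_combination (-b) * hdet
          | linear_combination b * hdet
          | linear_combination (-(1 + b)) * hdet
          | ring1
          | linear_combination (-1 : F) * hdet
    · push_neg at hb0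
      subst hb0
      have had : a ≠ d := by
        intro h
        exact hns ⟨rfl, rfl, h⟩
      have he : d - a ≠ 0 := fun h => had (by linear_combination -h)
      refine ⟨!![1, a; 1, d],
        !![d * (d - a)⁻¹, -a * (d - a)⁻¹; -(d - a)⁻¹, (d - a)⁻¹], ?_, ?_, ?_⟩ <;>
      · ext i j
        fin_cases i <;> fin_cases j <;>
          simp [Matrix.mul_apply, Fin.sum_univ_succ, Matrix.one_apply] <;> field_simp <;>
          first
          | rfl
          | ring1
          | linear_combination hdet
          | linear_combination (-1 : F) * hdet
          | linear_combination (a - d) * hdet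
          | linear_combination (d - a) * hdet
          | linear_combination (a - d - 1) * hdet
          | linear_combination (d - a - 1) * hdet
          | linear_combination (a + d) * hdet
          | linear_combination a * hdet
          | linear_combination d * hdet
          | linear_combination (-a) * hdet
          | linear_combination (-d) * hdet

lemma lemA [Fintype F] (h4 : 4 ≤ Fintype.card F)
    (g : Matrix.ProjectiveSpecialLinearGroup (Fin 2) F) (hg : g ≠ 1) :
    ∃ x, ¬ Commute g (x * g * x⁻¹) := by
  classical
  by_contra hcon
  push_neg at hcon
  obtain ⟨s, rfl⟩ := QuotientGroup.mk_surjective g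
  have hs_ncen : s ∉ Subgroup.center SL2 := fun hmem =>
    hg ((QuotientGroup.eq_one_iff s).mpr hmem)
  have hns : ¬ ((s : M2) 0 1 = 0 ∧ (s : M2) 1 0 = 0 ∧ (s : M2) 0 0 = (s : M2) 1 1) := by
    rintro ⟨hb, hcc, had⟩
    apply hs_ncen
    apply Matrix.SpecialLinearGroup.mem_center_iff.mpr
    refine ⟨(s : M2) 0 0, ?_, ?_⟩
    · rw [Fintype.card_fin]
      have hdet := s.2
      rw [Matrix.det_fin_two, hb] at hdet
      rw [had]
      linear_combination hdet - ((s : M2) 1 1) * had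
    · have := Matrix.eta_fin_two (s : M2)
      rw [hb, hcc, ← had] at this
      rw [this]
      ext i j
      fin_cases i <;> fin_cases j <;>
        simp [Matrix.scalar_apply, Matrix.diagonal]
  obtain ⟨P, Q, hPQ, hQP, hsPQ⟩ := companion s hns
  set t : F := (s : M2) 0 0 + (s : M2) 1 1 with ht
  obtain ⟨r, hr0, hrt, hralt⟩ := exists_good_r h4 t
  set u : M2 := !![1, r; 0, 1] with hu
  set u' : M2 := !![1, -r; 0, 1] with hu'
  set Ct : M2 := !![0, -1; 1, t] with hCt
  have hu'u : ∀ X : M2, u' * (u * X) = X := by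
    intro X
    rw [← mul_assoc]
    have : u' * u = 1 := by
      ext i j
      fin_cases i <;> fin_cases j <;>
        simp [hu, hu', Matrix.mul_apply, Fin.sum_univ_succ, Matrix.one_apply]
    rw [this, one_mul]
  have hQP' : ∀ X : M2, Q * (P * X) = X := by
    intro X
    rw [← mul_assoc, hQP, one_mul]
  have hdetu : u.det = 1 := by rw [hu, Matrix.det_fin_two]; simp
  have hdetc : (P * u * Q).det = 1 := by
    rw [Matrix.det_mul, Matrix.det_mul, hdetu, mul_one, ← Matrix.det_mul, hPQ,
      Matrix.det_one]
  have hyc : (P * (u * Ct * u') * Q) * (P * u * Q) = (P * u * Q) * (s : M2) := by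
    rw [hsPQ]
    simp only [mul_assoc]
    rw [hQP', hQP', hu'u]
  have star := star_lemma s hcon (P * u * Q) (P * (u * Ct * u') * Q) hdetc hyc
  have cancel : ∀ X Y : M2, P * X * Q = P * Y * Q → X = Y := by
    intro X Y h
    calc X = (Q * P) * X * (Q * P) := by rw [hQP, one_mul, mul_one]
      _ = Q * (P * X * Q) * P := by simp only [mul_assoc]
      _ = Q * (P * Y * Q) * P := by rw [h]
      _ = (Q * P) * Y * (Q * P) := by simp only [mul_assoc]
      _ = Y := by rw [hQP, one_mul, mul_one]
  have e2 : (s : M2) * (P * (u * Ct * u') * Q) = P * (Ct * (u * Ct * u')) * Q := by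
    rw [hsPQ]
    simp only [mul_assoc]
    rw [hQP']
  have e3 : (P * (u * Ct * u') * Q) * (s : M2) = P * ((u * Ct * u') * Ct) * Q := by
    rw [hsPQ]
    simp only [mul_assoc]
    rw [hQP']
  have eY : u * Ct * u' = !![r, r * t - r * r - 1; 1, t - r] := by
    ext i j
    fin_cases i <;> fin_cases j <;>
      simp [hu, hu', hCt, Matrix.mul_apply, Fin.sum_univ_succ] <;> ring
  have eA : Ct * (u * Ct * u') = !![-1, r - t; r + t, t * t - r * r - 1] := by
    rw [eY]
    ext i j
    fin_cases i <;> fin_cases j <;>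
      simp [hCt, Matrix.mul_apply, Fin.sum_univ_succ] <;> ring
  have eB : (u * Ct * u') * Ct =
      !![r * t - r * r - 1, -r + (r * t - r * r - 1) * t; t - r, -1 + (t - r) * t] := by
    rw [eY]
    ext i j
    fin_cases i <;> fin_cases j <;>
      simp [hCt, Matrix.mul_apply, Fin.sum_univ_succ] <;> ring
  rcases star with h | h
  · rw [e2, e3] at h
    have hin := cancel _ _ h
    rw [eA, eB] at hin
    have h00 : (-1 : F) = r * t - r * r - 1 := by
      have := congrFun (congrFun hin 0) 0
      simpa using this
    have : r * (t - r) = 0 := by linear_combination -h00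
    rcases mul_eq_zero.mp this with h' | h'
    · exact hr0 h'
    · exact hrt (by linear_combination -h')
  · rw [e2, e3] at h
    have h'' : P * (Ct * (u * Ct * u')) * Q = P * (-(u * Ct * u' * Ct)) * Q := by
      rw [h, mul_neg, neg_mul]
    have hin := cancel _ _ h''
    rw [eA, eB] at hin
    have h00 : (-1 : F) = -(r * t - r * r - 1) := by
      have := congrFun (congrFun hin 0) 0
      simpa using this
    have h10 : r + t = -(t - r) := by
      have := congrFun (congrFun hin 1) 0
      simpa using this
    rcases hralt with hx | hx
    · exact hx (by linear_combination h00)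
    · exact hx (by linear_combination h10)


set_option linter.unreachableTactic false
set_option linter.unusedTactic false

/-- A nontrivial conjugacy class of `PSL(2,q)` is abelian as a rack (all its elements commute
pairwise) if and only if `q ∈ {2, 3}` and the class is non-split semisimple, i.e. the order of
its elements exceeds `1` and divides `(q+1)/gcd(2, q-1)`. -/
theorem psl_two_abelian_class_iff (p n q : ℕ) (hp : p.Prime) (hn : n ≠ 0) (hq : q = p ^ n)
    (F : Type) [Field F] [Fintype F] (hF : Fintype.card F = q)
    (g : Matrix.ProjectiveSpecialLinearGroup (Fin 2) F) (hg : g ≠ 1) :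
    (∀ x y, IsConj g x → IsConj g y → Commute x y) ↔
      ((q = 2 ∨ q = 3) ∧ 1 < orderOf g ∧ orderOf g ∣ (q + 1) / Nat.gcd 2 (q - 1)) := by
  have hq2 : 2 ≤ q := by
    have h1 := hp.two_le
    have h2 := Nat.le_self_pow hn p
    omega
  have hord1 : 1 < orderOf g := by
    have h0 : 0 < orderOf g := orderOf_pos g
    have h1 : orderOf g ≠ 1 := fun he => hg (orderOf_eq_one_iff.mp he)
    omega
  by_cases hsm : q = 2 ∨ q = 3
  · rcases hsm with h2 | h3
    · have e : F ≃+* ZMod 2 :=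
        (ZMod.ringEquivOfPrime F (by norm_num) (by rw [hF, h2])).symm
      have key := main_small (pslCongr e) 3 d1_two d2_two g hg
      rw [key]
      have hval : (q + 1) / Nat.gcd 2 (q - 1) = 3 := by subst h2; rfl
      rw [hval]
      constructor
      · intro hgk
        exact ⟨Or.inl h2, hord1, orderOf_dvd_of_pow_eq_one hgk⟩
      · rintro ⟨_, _, hdvd⟩
        exact orderOf_dvd_iff_pow_eq_one.mp hdvd
    · have e : F ≃+* ZMod 3 :=
        (ZMod.ringEquivOfPrime F (by norm_num) (by rw [hF, h3])).symm
      have key := main_small (pslCongr e) 2 d1_three d2_three g hg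
      rw [key]
      have hval : (q + 1) / Nat.gcd 2 (q - 1) = 2 := by subst h3; rfl
      rw [hval]
      constructor
      · intro hgk
        exact ⟨Or.inr h3, hord1, orderOf_dvd_of_pow_eq_one hgk⟩
      · rintro ⟨_, _, hdvd⟩
        exact orderOf_dvd_iff_pow_eq_one.mp hdvd
  · have h4 : 4 ≤ Fintype.card F := by rw [hF]; omega
    constructor
    · intro H
      exfalso
      obtain ⟨x, hx⟩ := lemA h4 g hg
      exact hx (H g (x * g * x⁻¹) (IsConj.refl g) (isConj_iff.mpr ⟨x, rfl⟩))
    · rintro ⟨h23, _⟩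
      exact absurd h23 hsm
end
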